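/- arXiv:2310.16567 — 8 statements merged into one kernel-verified Lean document; each statement's English description precedes it below -/
import Mathlib

section
/- Suppose M is a 9×9 positive semidefinite complex matrix (a two-qutrit state on ℂ^3⊗ℂ^3) whose partial transpose M^Γ has inertia (4,1,4). Then for every 2×3 complex matrix P of rank two, the 6×6 matrix N = (P⊗I_3) M (P†⊗I_3) has a partial transpose N^Γ (with respect to the 2×3 bipartition) that is not positive semidefinite. -/
open Matrix Kronecker
open scoped ComplexOrder

/-- Partial transpose on the first factor of an `m × n` bipartite system:
`(ptrans M) ((i,k),(j,l)) = M ((j,k),(i,l))`. -/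
def ptrans {m n : ℕ} (M : Matrix (Fin m × Fin n) (Fin m × Fin n) ℂ) :
    Matrix (Fin m × Fin n) (Fin m × Fin n) ℂ :=
  Matrix.of fun p q => M (q.1, p.2) (p.1, q.2)

/-- Number of negative eigenvalues (with multiplicity) of a Hermitian matrix. -/
noncomputable def iNeg {ι : Type} [Fintype ι] [DecidableEq ι] {M : Matrix ι ι ℂ}
    (hM : M.IsHermitian) : ℕ :=
  (Finset.univ.filter fun i => hM.eigenvalues i < 0).card

/-- Number of zero eigenvalues (with multiplicity) of a Hermitian matrix. -/
noncomputable def iZero {ι : Type} [Fintype ι] [DecidableEq ι] {M : Matrix ι ι ℂ}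
    (hM : M.IsHermitian) : ℕ :=
  (Finset.univ.filter fun i => hM.eigenvalues i = 0).card

/-- Number of positive eigenvalues (with multiplicity) of a Hermitian matrix. -/
noncomputable def iPos {ι : Type} [Fintype ι] [DecidableEq ι] {M : Matrix ι ι ℂ}
    (hM : M.IsHermitian) : ℕ :=
  (Finset.univ.filter fun i => 0 < hM.eigenvalues i).card

/-! The partial transpose commutes with the local map: `N^Γ = Qᴴ M^Γ Q` with `Q = Pᵀ ⊗ I₃`,
which is injective because `P` has rank two. If `N^Γ` were positive semidefinite, the form of `M^Γ`
would be nonnegative on the six-dimensional range of `Q`. A subspace on which a Hermitian form is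
nonnegative meets the span of the eigenvectors with negative eigenvalues only in `0`, so its
dimension is at most `9 - 4 = 5`. -/

theorem Matrix.IsHermitian.dotProduct_mulVec_eq_sum_eigenvalues {𝕜 n : Type*} [RCLike 𝕜]
    [Fintype n] [DecidableEq n] {A : Matrix n n 𝕜} (hA : A.IsHermitian) (x : n → 𝕜) :
    star x ⬝ᵥ A *ᵥ x = ∑ i, (hA.eigenvalues i : 𝕜) *
      (star ((star (hA.eigenvectorUnitary : Matrix n n 𝕜) *ᵥ x) i) *
        (star (hA.eigenvectorUnitary : Matrix n n 𝕜) *ᵥ x) i) := by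
  have hstar : star x ᵥ* (hA.eigenvectorUnitary : Matrix n n 𝕜) =
      star (star (hA.eigenvectorUnitary : Matrix n n 𝕜) *ᵥ x) := by
    rw [star_mulVec, star_eq_conjTranspose, conjTranspose_conjTranspose]
  conv_lhs => rw [hA.spectral_theorem]
  rw [Unitary.conjStarAlgAut_apply, ← mulVec_mulVec, ← mulVec_mulVec, dotProduct_mulVec, hstar]
  simp only [mulVec_diagonal, dotProduct, Function.comp_apply, Pi.star_apply]
  exact Finset.sum_congr rfl fun i _ => by ring

theorem Matrix.IsHermitian.finrank_add_iNeg_le {ι : Type} [Fintype ι] [DecidableEq ι]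
    {A : Matrix ι ι ℂ} (hA : A.IsHermitian) (S : Submodule ℂ (ι → ℂ))
    (hS : ∀ x ∈ S, 0 ≤ star x ⬝ᵥ A *ᵥ x) :
    Module.finrank ℂ S + iNeg hA ≤ Fintype.card ι := by
  set U : Matrix ι ι ℂ := ↑hA.eigenvectorUnitary
  -- the eigen-coordinates of `x` at the nonnegative eigenvalues
  let L : (ι → ℂ) →ₗ[ℂ] ({i // ¬ hA.eigenvalues i < 0} → ℂ) :=
    LinearMap.funLeft ℂ ℂ Subtype.val ∘ₗ (star U).mulVecLin
  have hinj : Function.Injective (L.domRestrict S) := by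
    rw [← LinearMap.ker_eq_bot, LinearMap.ker_eq_bot']
    rintro ⟨x, hx⟩ hLx
    set c := star U *ᵥ x with hc
    have hc_nonneg : ∀ i, ¬ hA.eigenvalues i < 0 → c i = 0 := fun i hi =>
      congrFun hLx ⟨i, hi⟩
    have hterm : ∀ i, (hA.eigenvalues i : ℂ) * (star (c i) * c i) ≤ 0 := by
      intro i
      by_cases hi : hA.eigenvalues i < 0
      · exact mul_nonpos_of_nonpos_of_nonneg (by exact_mod_cast hi.le) (star_mul_self_nonneg _)
      · simp [hc_nonneg i hi]
    have hsum : ∑ i, (hA.eigenvalues i : ℂ) * (star (c i) * c i) = 0 :=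
      le_antisymm (Finset.sum_nonpos fun i _ => hterm i)
        (hA.dotProduct_mulVec_eq_sum_eigenvalues x ▸ hS x hx)
    have hc0 : c = 0 := by
      funext i
      by_cases hi : hA.eigenvalues i < 0
      · have := (Finset.sum_eq_zero_iff_of_nonpos fun i _ => hterm i).mp hsum i
          (Finset.mem_univ i)
        simpa [hi.ne] using this
      · exact hc_nonneg i hi
    refine Subtype.ext ?_
    calc x = U *ᵥ c := by
          rw [hc, mulVec_mulVec, Unitary.mul_star_self_of_mem hA.eigenvectorUnitary.2, one_mulVec]
      _ = 0 := by rw [hc0, mulVec_zero]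
  have hle := LinearMap.finrank_le_finrank_of_injective hinj
  rw [Module.finrank_fintype_fun_eq_card, Fintype.card_subtype_compl, Fintype.card_subtype] at hle
  have := Finset.card_le_univ (Finset.univ.filter fun i => hA.eigenvalues i < 0)
  unfold iNeg
  omega

theorem ptrans_kronecker_one_mul_mul {m m' n : ℕ} (M : Matrix (Fin m × Fin n) (Fin m × Fin n) ℂ)
    (P : Matrix (Fin m') (Fin m) ℂ) :
    ptrans ((P ⊗ₖ (1 : Matrix (Fin n) (Fin n) ℂ)) * M *
        (Pᴴ ⊗ₖ (1 : Matrix (Fin n) (Fin n) ℂ))) =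
      (Pᵀ ⊗ₖ (1 : Matrix (Fin n) (Fin n) ℂ))ᴴ * ptrans M *
        (Pᵀ ⊗ₖ (1 : Matrix (Fin n) (Fin n) ℂ)) := by
  refine Matrix.ext fun ⟨i, k⟩ ⟨j, l⟩ => ?_
  simp only [ptrans, of_apply, mul_apply, kroneckerMap_apply, conjTranspose_apply,
    transpose_apply, one_apply, Fintype.sum_prod_type, apply_ite star, star_zero, mul_ite,
    ite_mul, mul_one, mul_zero, zero_mul, Finset.sum_ite_eq, Finset.sum_ite_eq', Finset.mem_univ,
    if_true, Finset.sum_mul]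
  rw [Finset.sum_comm]
  exact Finset.sum_congr rfl fun a _ => Finset.sum_congr rfl fun b _ => by ring

theorem Matrix.kronecker_one_mulVec_apply {R l m n : Type*} [CommSemiring R] [Fintype m]
    [Fintype n] [DecidableEq n] (A : Matrix l m R) (y : m × n → R) (i : l) (k : n) :
    (A ⊗ₖ (1 : Matrix n n R) *ᵥ y) (i, k) = (A *ᵥ fun j => y (j, k)) i := by
  simp [mulVec, dotProduct, Fintype.sum_prod_type, one_apply]

theorem Matrix.mulVec_kronecker_one_injective {R l m n : Type*} [CommSemiring R] [Fintype m]
    [Fintype n] [DecidableEq n] {A : Matrix l m R} (hA : Function.Injective A.mulVec) :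
    Function.Injective (A ⊗ₖ (1 : Matrix n n R)).mulVec := by
  intro y z hyz
  funext ⟨j, k⟩
  have hk : A *ᵥ (fun j => y (j, k)) = A *ᵥ fun j => z (j, k) := by
    funext i
    simpa only [kronecker_one_mulVec_apply] using congrFun hyz (i, k)
  exact congrFun (hA hk) j

theorem Matrix.mulVec_injective_of_rank_eq_card {K m n : Type*} [Field K] [Fintype n]
    {A : Matrix m n K} (hA : A.rank = Fintype.card n) : Function.Injective A.mulVec := by
  have hrn := A.mulVecLin.finrank_range_add_finrank_ker
  rw [← Matrix.rank, hA, Module.finrank_fintype_fun_eq_card] at hrn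
  have hker : LinearMap.ker A.mulVecLin = ⊥ := Submodule.finrank_eq_zero.mp (by omega)
  exact LinearMap.ker_eq_bot.mp hker

theorem Matrix.PosSemidef.dotProduct_mulVec_nonneg_of_mem_range {𝕜 m n : Type*} [RCLike 𝕜]
    [Fintype m] [Fintype n] {A : Matrix m m 𝕜} {Q : Matrix m n 𝕜}
    (h : (Qᴴ * A * Q).PosSemidef) {x : m → 𝕜} (hx : x ∈ LinearMap.range Q.mulVecLin) :
    0 ≤ star x ⬝ᵥ A *ᵥ x := by
  obtain ⟨y, rfl⟩ := hx
  have := h.dotProduct_mulVec_nonneg y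
  rwa [← mulVec_mulVec, ← mulVec_mulVec, dotProduct_mulVec, ← star_mulVec] at this

theorem projected_state_npt_general
    (M : Matrix (Fin 3 × Fin 3) (Fin 3 × Fin 3) ℂ)
    (hΓ : (ptrans M).IsHermitian)
    (hneg : iNeg hΓ = 4)
    (P : Matrix (Fin 2) (Fin 3) ℂ) (hP : P.rank = 2) :
    ¬ (ptrans ((P ⊗ₖ (1 : Matrix (Fin 3) (Fin 3) ℂ)) * M *
        (Pᴴ ⊗ₖ (1 : Matrix (Fin 3) (Fin 3) ℂ)))).PosSemidef := by
  intro hN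
  rw [ptrans_kronecker_one_mul_mul] at hN
  set Q := Pᵀ ⊗ₖ (1 : Matrix (Fin 3) (Fin 3) ℂ)
  have hQ : Function.Injective Q.mulVec := mulVec_kronecker_one_injective <|
    mulVec_injective_of_rank_eq_card (by rw [rank_transpose, hP, Fintype.card_fin])
  have h := hΓ.finrank_add_iNeg_le (LinearMap.range Q.mulVecLin) fun x hx =>
    hN.dotProduct_mulVec_nonneg_of_mem_range hx
  rw [LinearMap.finrank_range_of_inj hQ, hneg] at h
  simp at h

/-- If `M` is a two-qutrit state whose partial transpose has inertia (4,1,4),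
then for any 2×3 matrix `P` of rank two, the projected state
`(P ⊗ I₃) M (P† ⊗ I₃)` is NPT. -/
theorem projected_state_npt
    (M : Matrix (Fin 3 × Fin 3) (Fin 3 × Fin 3) ℂ) (hM : M.PosSemidef)
    (hΓ : (ptrans M).IsHermitian)
    (hneg : iNeg hΓ = 4) (hzero : iZero hΓ = 1) (hpos : iPos hΓ = 4)
    (P : Matrix (Fin 2) (Fin 3) ℂ) (hP : P.rank = 2) :
    ¬ (ptrans ((P ⊗ₖ (1 : Matrix (Fin 3) (Fin 3) ℂ)) * M *
        (Pᴴ ⊗ₖ (1 : Matrix (Fin 3) (Fin 3) ℂ)))).PosSemidef :=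
  projected_state_npt_general M hΓ hneg P hP
end

section
/- There is no 12×12 positive semidefinite complex matrix M (a state on ℂ^3⊗ℂ^4) whose partial transpose M^Γ has inertia (7,1,4), and there is no such matrix whose partial transpose has inertia (7,2,3). -/
/-!
If a product vector `z = x ⊗ y` is orthogonal to every eigenvector of `M^Γ` with nonnegative
eigenvalue, then `z* M^Γ z < 0`; but `z* M^Γ z = u* M u ≥ 0` for `u = x̄ ⊗ y`. Orthogonality
to `r` eigenvectors is a system of `r` bilinear equations in `(x, y)`, and `r ≤ a + b`
bilinear forms on `K^(a+1) × K^(b+1)` (`K` algebraically closed) always have a common zero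
with `x, y ≠ 0`: the Segre variety `ℙ^a × ℙ^b` has dimension `a + b`. Hence `M^Γ` has at most
`(a + 1)(b + 1) - (a + b + 1) = a b` negative eigenvalues, which is `6 < 7` for a `3 × 4` state.

The common zero comes from a Hilbert-function count. Without one, the Nullstellensatz puts a
power `(x_i y_k)^N` of every product into the ideal of the forms, so every polynomial of
bidegree `(L + t, L + t)` is a combination of products of `t` forms with monomials of bidegree
`(L, L)`. The space of such polynomials has dimension of order `t^(a+b)`, while there are only
`O(t^(r-1))` such products.
-/

open Matrix Kronecker
open scoped ComplexOrder

open MvPolynomial Finset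

section WeightedHomogeneous

variable {σ M R : Type*} [CommSemiring R] [AddCancelCommMonoid M] {w : σ → M}

theorem weightedHomogeneousComponent_mul_of_isWeightedHomogeneous (p : MvPolynomial σ R)
    {q : MvPolynomial σ R} {m : M} (hq : q.IsWeightedHomogeneous w m) (n : M) :
    weightedHomogeneousComponent w (n + m) (p * q) = weightedHomogeneousComponent w n p * q := by
  conv_lhs => rw [p.as_sum, Finset.sum_mul, map_sum]
  conv_rhs => rw [p.as_sum, map_sum, Finset.sum_mul]
  refine Finset.sum_congr rfl fun d _ => ?_
  have hd : (monomial d (coeff d p)).IsWeightedHomogeneous w (Finsupp.weight w d) :=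
    isWeightedHomogeneous_monomial _ _ _ rfl
  by_cases hn : n = Finsupp.weight w d
  · subst hn
    rw [(hd.mul hq).weightedHomogeneousComponent_same, hd.weightedHomogeneousComponent_same]
  · rw [(hd.mul hq).weightedHomogeneousComponent_ne _ fun h => hn (add_right_cancel h),
      hd.weightedHomogeneousComponent_ne _ hn, zero_mul]

theorem weightedHomogeneousSubmodule_eq_span_monomial (m : M) :
    weightedHomogeneousSubmodule R w m =
      Submodule.span R ((fun d => monomial d (1 : R)) '' {d | Finsupp.weight w d = m}) := by
  rw [weightedHomogeneousSubmodule_eq_finsupp_supported,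
    AddMonoidAlgebra.supported_eq_span_single]
  rfl

theorem exists_sum_mul_of_mem_span_of_isWeightedHomogeneous {ι : Type*} [Fintype ι]
    {f : ι → MvPolynomial σ R} {m : M} (hf : ∀ j, (f j).IsWeightedHomogeneous w m)
    {p : MvPolynomial σ R} {n : M} (hp : p.IsWeightedHomogeneous w (n + m))
    (hpI : p ∈ Ideal.span (Set.range f)) :
    ∃ q : ι → MvPolynomial σ R,
      (∀ j, (q j).IsWeightedHomogeneous w n) ∧ p = ∑ j, q j * f j := by
  obtain ⟨g, hg⟩ := Ideal.mem_span_range_iff_exists_fun.mp hpI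
  refine ⟨fun j => weightedHomogeneousComponent w n (g j),
    fun j => weightedHomogeneousComponent_isWeightedHomogeneous _ _, ?_⟩
  rw [← hp.weightedHomogeneousComponent_same, ← hg, map_sum]
  exact Finset.sum_congr rfl fun j _ =>
    weightedHomogeneousComponent_mul_of_isWeightedHomogeneous _ (hf j) n

end WeightedHomogeneous

section Bigraded

variable {α β : Type*} [Fintype α] [Fintype β]

def bideg : α ⊕ β → ℕ × ℕ := Sum.elim (fun _ => (1, 0)) fun _ => (0, 1)

theorem weight_bideg (d : α ⊕ β →₀ ℕ) :
    Finsupp.weight bideg d = (∑ i, d (Sum.inl i), ∑ k, d (Sum.inr k)) := by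
  rw [Finsupp.weight_apply, Finsupp.sum_fintype _ _ fun _ => by simp, Fintype.sum_sum_type]
  ext <;> simp [bideg, Prod.fst_sum, Prod.snd_sum]

variable [DecidableEq α] [DecidableEq β]

noncomputable def bidegExps (m n : ℕ) : Finset (α ⊕ β →₀ ℕ) :=
  (piAntidiag univ m ×ˢ piAntidiag univ n).map
    ((Equiv.sumArrowEquivProdArrow α β ℕ).symm.trans Finsupp.equivFunOnFinite.symm).toEmbedding

theorem mem_bidegExps {m n : ℕ} {d : α ⊕ β →₀ ℕ} :
    d ∈ bidegExps m n ↔ Finsupp.weight bideg d = (m, n) := by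
  rw [bidegExps, Finset.mem_map_equiv, weight_bideg]
  simp [Prod.ext_iff, Equiv.sumArrowEquivProdArrow, Function.comp_def]

theorem card_bidegExps (m n : ℕ) :
    (bidegExps (α := α) (β := β) m n).card =
      (piAntidiag (univ : Finset α) m).card * (piAntidiag (univ : Finset β) n).card := by
  rw [bidegExps, card_map, card_product]

end Bigraded

section BilinearForms

variable {R : Type*} [CommSemiring R] {α β : Type*} [Fintype α] [Fintype β]

noncomputable def bilinPoly (c : α → β → R) : MvPolynomial (α ⊕ β) R :=
  ∑ i, ∑ k, C (c i k) * X (Sum.inl i) * X (Sum.inr k)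

theorem isWeightedHomogeneous_bilinPoly (c : α → β → R) :
    (bilinPoly c).IsWeightedHomogeneous bideg (1, 1) := by
  refine IsWeightedHomogeneous.sum _ _ _ fun i _ =>
    IsWeightedHomogeneous.sum _ _ _ fun k _ => ?_
  simpa [bideg] using ((isWeightedHomogeneous_C bideg (c i k)).mul
    (isWeightedHomogeneous_X R bideg (Sum.inl i))).mul
      (isWeightedHomogeneous_X R bideg (Sum.inr k))

theorem eval_bilinPoly (c : α → β → R) (v : α ⊕ β → R) :
    eval v (bilinPoly c) = ∑ i, ∑ k, c i k * v (Sum.inl i) * v (Sum.inr k) := by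
  simp [bilinPoly]

theorem monomial_mem_of_pow_mem {I : Ideal (MvPolynomial (α ⊕ β) R)} {N : ℕ}
    (hN : ∀ i k, (X (Sum.inl i) * X (Sum.inr k)) ^ N ∈ I) {d : α ⊕ β →₀ ℕ}
    (hα : Fintype.card α * N < ∑ i, d (Sum.inl i))
    (hβ : Fintype.card β * N < ∑ k, d (Sum.inr k)) :
    monomial d (1 : R) ∈ I := by
  classical
  obtain ⟨i, -, hi⟩ : ∃ i ∈ univ, N < d (Sum.inl i) + 1 :=
    exists_lt_of_sum_lt (by simp [sum_add_distrib]; omega)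
  obtain ⟨k, -, hk⟩ : ∃ k ∈ univ, N < d (Sum.inr k) + 1 :=
    exists_lt_of_sum_lt (by simp [sum_add_distrib]; omega)
  set s : α ⊕ β →₀ ℕ := Finsupp.single (Sum.inl i) N + Finsupp.single (Sum.inr k) N
  have hs : s ≤ d := by
    intro v
    rcases v with i' | k' <;> simp only [s, Finsupp.add_apply, Finsupp.single_apply] <;>
      split_ifs <;> simp_all
  have hX : (X (Sum.inl i) * X (Sum.inr k)) ^ N = monomial s (1 : R) := by
    rw [mul_pow, X_pow_eq_monomial, X_pow_eq_monomial, monomial_mul, mul_one]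
  rw [← tsub_add_cancel_of_le hs, ← mul_one (1 : R), ← monomial_mul, ← hX]
  exact I.mul_mem_left _ (hN i k)

end BilinearForms

section FormProducts

variable {R : Type*} [CommSemiring R] {α β : Type*} [Fintype α] [Fintype β]
  [DecidableEq α] [DecidableEq β] {r : ℕ}

open Classical in
noncomputable def formProducts (f : Fin r → MvPolynomial (α ⊕ β) R) (L t : ℕ) :
    Finset (MvPolynomial (α ⊕ β) R) :=
  (Nat.antidiagonalTuple r t ×ˢ bidegExps L L).image fun p =>
    (∏ j, f j ^ p.1 j) * monomial p.2 1

theorem card_formProducts_le (f : Fin r → MvPolynomial (α ⊕ β) R) (L t : ℕ) :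
    (formProducts f L t).card ≤
      (Nat.antidiagonalTuple r t).card * (bidegExps (α := α) (β := β) L L).card := by
  classical
  exact card_image_le.trans (card_product _ _).le

theorem mul_mem_span_formProducts {f : Fin r → MvPolynomial (α ⊕ β) R} {L t : ℕ}
    {p : MvPolynomial (α ⊕ β) R} (hp : p ∈ Submodule.span R (formProducts f L t : Set _))
    (j : Fin r) : p * f j ∈ Submodule.span R (formProducts f L (t + 1) : Set _) := by
  classical
  have hmap := Submodule.mem_map_of_mem (f := LinearMap.mulRight R (f j)) hp
  rw [Submodule.map_span] at hmap
  refine Submodule.span_mono ?_ hmap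
  rintro _ ⟨_, hq, rfl⟩
  obtain ⟨⟨e, d⟩, he, rfl⟩ := mem_image.mp (mem_coe.mp hq)
  rw [mem_product, Nat.mem_antidiagonalTuple] at he
  refine mem_coe.mpr (mem_image.mpr ⟨(e + Pi.single j 1, d), ?_, ?_⟩)
  · rw [mem_product, Nat.mem_antidiagonalTuple]
    exact ⟨by simp [sum_add_distrib, he.1], he.2⟩
  · simp only [Pi.add_apply, pow_add, prod_mul_distrib, Pi.single_apply, pow_ite, pow_one,
      pow_zero, prod_ite_eq', mem_univ, if_true, LinearMap.mulRight_apply]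
    ring

theorem weightedHomogeneousSubmodule_le_span_formProducts {f : Fin r → MvPolynomial (α ⊕ β) R}
    (hf : ∀ j, (f j).IsWeightedHomogeneous bideg (1, 1)) {N L : ℕ}
    (hN : ∀ i k, (X (Sum.inl i) * X (Sum.inr k)) ^ N ∈ Ideal.span (Set.range f))
    (hα : Fintype.card α * N ≤ L) (hβ : Fintype.card β * N ≤ L) (t : ℕ) :
    weightedHomogeneousSubmodule R bideg (L + t, L + t) ≤
      Submodule.span R (formProducts f L t : Set (MvPolynomial (α ⊕ β) R)) := by
  classical
  induction t with
  | zero =>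
    rw [weightedHomogeneousSubmodule_eq_span_monomial, Submodule.span_le]
    rintro _ ⟨d, hd, rfl⟩
    refine Submodule.subset_span (mem_image.mpr ⟨(0, d), ?_, by simp⟩)
    rw [mem_product, Nat.mem_antidiagonalTuple, mem_bidegExps]
    exact ⟨by simp, hd⟩
  | succ t ih =>
    rw [weightedHomogeneousSubmodule_eq_span_monomial, Submodule.span_le]
    rintro _ ⟨d, hd, rfl⟩
    have hmem : monomial d (1 : R) ∈ Ideal.span (Set.range f) := by
      rw [Set.mem_ofPred_eq, weight_bideg, Prod.ext_iff] at hd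
      exact monomial_mem_of_pow_mem hN (by omega) (by omega)
    have hhom : (monomial d (1 : R)).IsWeightedHomogeneous bideg ((L + t, L + t) + (1, 1)) :=
      isWeightedHomogeneous_monomial _ _ _ hd
    obtain ⟨q, hq, hsum⟩ := exists_sum_mul_of_mem_span_of_isWeightedHomogeneous hf hhom hmem
    change monomial d (1 : R) ∈ _
    rw [hsum]
    exact Submodule.sum_mem _ fun j _ => mul_mem_span_formProducts (ih (hq j)) j

end FormProducts

section Dimension

variable {R : Type*} [CommRing R] [Nontrivial R] {α β : Type*} [Fintype α] [Fintype β]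
  [DecidableEq α] [DecidableEq β] {r : ℕ}

theorem card_bidegExps_le_card_formProducts {f : Fin r → MvPolynomial (α ⊕ β) R}
    (hf : ∀ j, (f j).IsWeightedHomogeneous bideg (1, 1)) {N L : ℕ}
    (hN : ∀ i k, (X (Sum.inl i) * X (Sum.inr k)) ^ N ∈ Ideal.span (Set.range f))
    (hα : Fintype.card α * N ≤ L) (hβ : Fintype.card β * N ≤ L) (t : ℕ) :
    (bidegExps (α := α) (β := β) (L + t) (L + t)).card ≤ (formProducts f L t).card := by
  have hli : LinearIndependent R fun d : bidegExps (α := α) (β := β) (L + t) (L + t) =>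
      monomial (d : α ⊕ β →₀ ℕ) (1 : R) := by
    simpa [Function.comp_def] using
      (basisMonomials (α ⊕ β) R).linearIndependent.comp _ Subtype.val_injective
  have hle := linearIndependent_le_span_aux' _ hli (formProducts f L t) <| by
    rintro _ ⟨d, rfl⟩
    apply weightedHomogeneousSubmodule_le_span_formProducts hf hN hα hβ t
    exact isWeightedHomogeneous_monomial _ _ _ (mem_bidegExps.mp d.2)
  simpa using hle

end Dimension

section Counting

theorem card_antidiagonalTuple_mul_le (r t : ℕ) :
    (Nat.antidiagonalTuple r t).card * (t + 1) ≤ (t + 1) ^ r := by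
  cases r with
  | zero => cases t <;> simp [Nat.antidiagonalTuple_zero_succ]
  | succ k =>
    have h : (Nat.antidiagonalTuple (k + 1) t).card ≤
        (Fintype.piFinset fun _ : Fin k => range (t + 1)).card := by
      refine card_le_card_of_injOn Fin.tail (fun e he => ?_) fun e he e' he' hee' => ?_
      · rw [mem_coe, Nat.mem_antidiagonalTuple] at he
        simp only [mem_coe, Fintype.mem_piFinset, mem_range]
        intro j
        have := single_le_sum (fun j _ => Nat.zero_le (e j)) (mem_univ j.succ)
        rw [he] at this
        exact Nat.lt_succ_of_le this
      · rw [mem_coe, Nat.mem_antidiagonalTuple, Fin.sum_univ_succ] at he he'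
        have h0 : e 0 = e' 0 := by
          have : ∑ j : Fin k, e j.succ = ∑ j : Fin k, e' j.succ :=
            sum_congr rfl fun j _ => congrFun hee' j
          omega
        rw [← Fin.cons_self_tail e, ← Fin.cons_self_tail e', h0, hee']
    rw [Fintype.card_piFinset, prod_const, card_range, card_univ, Fintype.card_fin] at h
    calc _ ≤ (t + 1) ^ k * (t + 1) := Nat.mul_le_mul_right _ h
      _ = (t + 1) ^ (k + 1) := (pow_succ _ _).symm

theorem pow_le_card_antidiagonalTuple {k q t : ℕ} (h : k * q ≤ t) :
    (q + 1) ^ k ≤ (Nat.antidiagonalTuple (k + 1) t).card := by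
  have hinj := card_le_card_of_injOn (s := Fintype.piFinset fun _ : Fin k => range (q + 1))
    (t := Nat.antidiagonalTuple (k + 1) t) (fun g => Fin.cons (t - ∑ j, g j) g) ?_
    fun g _ g' _ hgg' => (Fin.cons_injective2 hgg').2
  · simpa [Fintype.card_piFinset] using hinj
  intro g hg
  simp only [mem_coe, Fintype.mem_piFinset, mem_range] at hg
  have hsum : ∑ j, g j ≤ t := calc
    ∑ j, g j ≤ ∑ _j : Fin k, q := sum_le_sum fun j _ => Nat.lt_succ_iff.mp (hg j)
    _ = k * q := by simp
    _ ≤ t := h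
  rw [mem_coe, Nat.mem_antidiagonalTuple, Fin.sum_cons]
  omega

/-- The left side is `O(t^(r - 1))` and the right side at least of order `t^(a + b)`;
the witness is `t = (a + b + 1)^(a + b) * D`. -/
theorem exists_card_antidiagonalTuple_mul_lt {a b r : ℕ} (hr : r ≤ a + b) (L D : ℕ) :
    ∃ t, (Nat.antidiagonalTuple r t).card * D <
      (Nat.antidiagonalTuple (a + 1) (L + t)).card *
        (Nat.antidiagonalTuple (b + 1) (L + t)).card := by
  set c := a + b + 1
  set t := c ^ (a + b) * D with ht
  set q := t / c
  refine ⟨t, lt_of_not_ge fun hle => ?_⟩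
  have hc : 0 < c := Nat.succ_pos _
  have hqt : c * q ≤ t := Nat.mul_div_le t c
  have htq : t + 1 ≤ c * (q + 1) := Nat.lt_mul_div_succ t hc
  have hx : (q + 1) ^ a ≤ (Nat.antidiagonalTuple (a + 1) (L + t)).card :=
    pow_le_card_antidiagonalTuple <|
      ((Nat.mul_le_mul_right q (by omega : a ≤ c)).trans hqt).trans (Nat.le_add_left t L)
  have hy : (q + 1) ^ b ≤ (Nat.antidiagonalTuple (b + 1) (L + t)).card :=
    pow_le_card_antidiagonalTuple <|
      ((Nat.mul_le_mul_right q (by omega : b ≤ c)).trans hqt).trans (Nat.le_add_left t L)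
  have hcount := card_antidiagonalTuple_mul_le r t
  have : (q + 1) ^ (a + b) * (t + 1) < (q + 1) ^ (a + b) * (t + 1) := calc
    (q + 1) ^ (a + b) * (t + 1)
      ≤ (Nat.antidiagonalTuple r t).card * D * (t + 1) := by
        rw [pow_add]; exact Nat.mul_le_mul_right _ ((Nat.mul_le_mul hx hy).trans hle)
    _ = (Nat.antidiagonalTuple r t).card * (t + 1) * D := by ring
    _ ≤ (t + 1) ^ (a + b) * D := by
        gcongr; exact hcount.trans (Nat.pow_le_pow_right (Nat.succ_pos t) hr)
    _ ≤ (c * (q + 1)) ^ (a + b) * D := by gcongr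
    _ = t * (q + 1) ^ (a + b) := by rw [mul_pow, ht]; ring
    _ < (q + 1) ^ (a + b) * (t + 1) := by
        rw [mul_comm]; exact Nat.mul_lt_mul_of_pos_left (Nat.lt_succ_self t) (by positivity)
  exact lt_irrefl _ this

end Counting

section CommonZero

variable {K : Type*} [Field K] [IsAlgClosed K]

theorem exists_pow_mem_span_bilinPoly {ρ α β : Type*} [Fintype α] [Fintype β]
    (c : ρ → α → β → K)
    (h : ∀ (x : α → K) (y : β → K), x ≠ 0 → y ≠ 0 →
      ∃ j, ∑ i, ∑ k, c j i k * x i * y k ≠ 0) :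
    ∃ N, ∀ i k, (X (Sum.inl i) * X (Sum.inr k)) ^ N ∈
      Ideal.span (Set.range fun j => bilinPoly (c j)) := by
  have hrad : ∀ i k, (X (Sum.inl i) * X (Sum.inr k) : MvPolynomial (α ⊕ β) K) ∈
      (Ideal.span (Set.range fun j => bilinPoly (c j))).radical := by
    intro i k
    rw [← vanishingIdeal_zeroLocus_eq_radical (K := K), mem_vanishingIdeal_iff]
    intro v hv
    rw [mem_zeroLocus_iff] at hv
    have hzero : ∀ j, ∑ i, ∑ k, c j i k * v (Sum.inl i) * v (Sum.inr k) = 0 := fun j => by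
      rw [← eval_bilinPoly]
      exact hv _ (Ideal.subset_span ⟨j, rfl⟩)
    rw [map_mul, aeval_X, aeval_X, mul_eq_zero]
    by_contra! hne
    obtain ⟨j, hj⟩ := h (fun i => v (Sum.inl i)) (fun k => v (Sum.inr k))
      (Function.ne_iff.mpr ⟨i, hne.1⟩) (Function.ne_iff.mpr ⟨k, hne.2⟩)
    exact hj (hzero j)
  choose n hn using fun p : α × β => hrad p.1 p.2
  exact ⟨univ.sup n, fun i k => Ideal.pow_mem_of_pow_mem _ (hn (i, k)) (le_sup (mem_univ _))⟩

theorem exists_ne_zero_forall_bilinear_eq_zero {a b r : ℕ} (hr : r ≤ a + b)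
    (c : Fin r → Fin (a + 1) → Fin (b + 1) → K) :
    ∃ (x : Fin (a + 1) → K) (y : Fin (b + 1) → K), x ≠ 0 ∧ y ≠ 0 ∧
      ∀ j, ∑ i, ∑ k, c j i k * x i * y k = 0 := by
  by_contra! h
  obtain ⟨N, hN⟩ := exists_pow_mem_span_bilinPoly c h
  set L := (a + b + 2) * N
  obtain ⟨t, ht⟩ := exists_card_antidiagonalTuple_mul_lt hr L
    (bidegExps (α := Fin (a + 1)) (β := Fin (b + 1)) L L).card
  have hα : Fintype.card (Fin (a + 1)) * N ≤ L := by
    rw [Fintype.card_fin]; exact Nat.mul_le_mul_right N (by omega)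
  have hβ : Fintype.card (Fin (b + 1)) * N ≤ L := by
    rw [Fintype.card_fin]; exact Nat.mul_le_mul_right N (by omega)
  have hcard := card_bidegExps_le_card_formProducts
    (fun j => isWeightedHomogeneous_bilinPoly (c j)) hN hα hβ t
  rw [card_bidegExps, piAntidiag_univ_fin_eq_antidiagonalTuple,
    piAntidiag_univ_fin_eq_antidiagonalTuple] at hcard
  exact (hcard.trans (card_formProducts_le _ L t)).not_gt ht

end CommonZero

namespace Matrix.IsHermitian

variable {𝕜 n : Type*} [RCLike 𝕜] [Fintype n] [DecidableEq n] {A : Matrix n n 𝕜}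

theorem dotProduct_mulVec_eq_sum_eigenvalues_s5 (hA : A.IsHermitian) (v : n → 𝕜) :
    star v ⬝ᵥ (A *ᵥ v) = ((∑ j, hA.eigenvalues j *
      ‖(star (hA.eigenvectorUnitary : Matrix n n 𝕜) *ᵥ v) j‖ ^ 2 : ℝ) : 𝕜) := by
  set U : Matrix n n 𝕜 := (hA.eigenvectorUnitary : Matrix n n 𝕜)
  conv_lhs => rw [hA.spectral_theorem, Unitary.conjStarAlgAut_apply]
  rw [← mulVec_mulVec, ← mulVec_mulVec, dotProduct_mulVec,
    show star v ᵥ* U = star (star U *ᵥ v) by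
      rw [star_mulVec, star_eq_conjTranspose, conjTranspose_conjTranspose]]
  simp only [dotProduct, mulVec_diagonal, Pi.star_apply, Function.comp_apply, RCLike.ofReal_sum,
    RCLike.ofReal_mul, RCLike.ofReal_pow, ← RCLike.mul_conj]
  exact Finset.sum_congr rfl fun j _ => by rw [RCLike.star_def]; ring

theorem dotProduct_mulVec_neg (hA : A.IsHermitian) {v : n → 𝕜} (hv : v ≠ 0)
    (hvw : ∀ j, 0 ≤ hA.eigenvalues j →
      (star (hA.eigenvectorUnitary : Matrix n n 𝕜) *ᵥ v) j = 0) :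
    star v ⬝ᵥ (A *ᵥ v) < 0 := by
  have hw : star (hA.eigenvectorUnitary : Matrix n n 𝕜) *ᵥ v ≠ 0 := fun h => hv <| by
    rw [← one_mulVec v, ← Unitary.coe_mul_star_self hA.eigenvectorUnitary, ← mulVec_mulVec,
      Unitary.coe_star, h, mulVec_zero]
  obtain ⟨j₀, hj₀⟩ := Function.ne_iff.mp hw
  rw [hA.dotProduct_mulVec_eq_sum_eigenvalues_s5, RCLike.ofReal_lt_zero]
  refine Finset.sum_neg' (fun j _ => ?_) ⟨j₀, Finset.mem_univ _, ?_⟩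
  · rcases lt_or_ge (hA.eigenvalues j) 0 with hj | hj
    · exact mul_nonpos_of_nonpos_of_nonneg hj.le (by positivity)
    · rw [hvw j hj, norm_zero, zero_pow two_ne_zero, mul_zero]
  · exact mul_neg_of_neg_of_pos (lt_of_not_ge fun h => hj₀ (hvw j₀ h))
      (pow_pos (norm_pos_iff.mpr hj₀) 2)

end Matrix.IsHermitian

theorem dotProduct_ptrans_mulVec_prod {m n : ℕ} (M : Matrix (Fin m × Fin n) (Fin m × Fin n) ℂ)
    (x : Fin m → ℂ) (y : Fin n → ℂ) :
    star (fun p : Fin m × Fin n => x p.1 * y p.2) ⬝ᵥ (ptrans M *ᵥ fun p => x p.1 * y p.2) =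
      star (fun p : Fin m × Fin n => star (x p.1) * y p.2) ⬝ᵥ
        (M *ᵥ fun p => star (x p.1) * y p.2) := by
  simp only [dotProduct, mulVec, Finset.mul_sum, ← Finset.univ_product_univ, Finset.sum_product]
  conv_lhs => enter [2, i]; rw [Finset.sum_comm]
  rw [Finset.sum_comm]
  conv_lhs => enter [2, j]; rw [Finset.sum_comm]
  refine Finset.sum_congr rfl fun j _ => Finset.sum_congr rfl fun k _ =>
    Finset.sum_congr rfl fun i _ => Finset.sum_congr rfl fun l _ => ?_
  simp only [Pi.star_apply, ptrans, of_apply, star_mul', star_star]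
  ring

theorem iNeg_ptrans_le {a b : ℕ}
    {M : Matrix (Fin (a + 1) × Fin (b + 1)) (Fin (a + 1) × Fin (b + 1)) ℂ}
    (hM : M.PosSemidef) (hΓ : (ptrans M).IsHermitian) : iNeg hΓ ≤ a * b := by
  by_contra! hlt
  have hcard : Fintype.card {j // 0 ≤ hΓ.eigenvalues j} ≤ a + b := by
    have h := card_filter_add_card_filter_not (s := univ) fun j => hΓ.eigenvalues j < 0
    simp only [not_lt, card_univ, Fintype.card_prod, Fintype.card_fin] at h
    rw [iNeg] at hlt
    rw [Fintype.card_subtype]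
    nlinarith
  let e := Fintype.equivFin {j // 0 ≤ hΓ.eigenvalues j}
  obtain ⟨x, y, hx, hy, hxy⟩ := exists_ne_zero_forall_bilinear_eq_zero hcard
    fun r i k => star (hΓ.eigenvectorBasis (e.symm r) (i, k))
  have hz : (fun p : Fin (a + 1) × Fin (b + 1) => x p.1 * y p.2) ≠ 0 := by
    obtain ⟨i, hi⟩ := Function.ne_iff.mp hx
    obtain ⟨k, hk⟩ := Function.ne_iff.mp hy
    exact Function.ne_iff.mpr ⟨(i, k), mul_ne_zero hi hk⟩
  have hneg := hΓ.dotProduct_mulVec_neg hz fun j hj => by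
    have horth := hxy (e ⟨j, hj⟩)
    simp only [Equiv.symm_apply_apply] at horth
    rw [← horth, mulVec, dotProduct, Fintype.sum_prod_type]
    simp [mul_assoc]
  rw [dotProduct_ptrans_mulVec_prod] at hneg
  exact hneg.not_ge (hM.dotProduct_mulVec_nonneg _)

/-- There is no 3×4 state whose partial transpose has inertia (7,1,4),
and none with inertia (7,2,3). -/
theorem no_inertia_714_723 :
    (¬ ∃ (M : Matrix (Fin 3 × Fin 4) (Fin 3 × Fin 4) ℂ)
        (hΓ : (ptrans M).IsHermitian),
      M.PosSemidef ∧ iNeg hΓ = 7 ∧ iZero hΓ = 1 ∧ iPos hΓ = 4) ∧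
    (¬ ∃ (M : Matrix (Fin 3 × Fin 4) (Fin 3 × Fin 4) ℂ)
        (hΓ : (ptrans M).IsHermitian),
      M.PosSemidef ∧ iNeg hΓ = 7 ∧ iZero hΓ = 2 ∧ iPos hΓ = 3) := by
  constructor <;>
  · rintro ⟨M, hΓ, hM, h7, -, -⟩
    have := iNeg_ptrans_le (a := 2) (b := 3) hM hΓ
    omega
end

section
/- There is no 12×12 positive semidefinite complex matrix M (a state on ℂ^3⊗ℂ^4) whose partial transpose M^Γ has inertia (8,0,4), nor one with inertia (8,1,3), nor one with inertia (9,0,3). -/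
/-!
If `M ≥ 0` but `M^Γ` had at most `n` nonnegative eigenvalues, a nonzero product vector `u ⊗ v`
could be chosen orthogonal to the corresponding eigenvectors: these are at most `n` linear
conditions, and over an algebraically closed field some `u ≠ 0` in the span of two basis vectors
makes the resulting `n × n` matrix pencil singular. Then `⟪u ⊗ v, M^Γ (u ⊗ v)⟫ < 0`, while this
number equals `⟪ū ⊗ v, M (ū ⊗ v)⟫ ≥ 0`. All three inertias leave at most `4` nonnegative
eigenvalues.
-/

open Matrix Kronecker
open scoped ComplexOrder

theorem Matrix.exists_mulVec_smul_add_smul_eq_zero {K ν : Type*} [Field K] [IsAlgClosed K]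
    [Fintype ν] [DecidableEq ν] [Nonempty ν] (A B : Matrix ν ν K) :
    ∃ s t : K, (s, t) ≠ 0 ∧ ∃ v ≠ 0, (s • A + t • B) *ᵥ v = 0 := by
  by_cases hA : A.det = 0
  · obtain ⟨v, hv, hAv⟩ := exists_mulVec_eq_zero_iff.2 hA
    exact ⟨1, 0, by simp, v, hv, by simpa using hAv⟩
  · obtain ⟨μ, hμ⟩ := Module.End.exists_eigenvalue (toLin' (A⁻¹ * B))
    obtain ⟨v, hv⟩ := hμ.exists_hasEigenvector
    have hBv : (A⁻¹ * B) *ᵥ v = μ • v := Module.End.mem_eigenspace_iff.1 hv.1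
    have hAB : A * (A⁻¹ * B) = B := by
      rw [← Matrix.mul_assoc, mul_nonsing_inv _ (isUnit_iff_ne_zero.2 hA), Matrix.one_mul]
    refine ⟨-μ, 1, by simp, v, hv.2, ?_⟩
    rw [add_mulVec, smul_mulVec, one_smul, ← hAB, ← mulVec_mulVec, hBv, mulVec_smul]
    simp

def prodVec {R ι ν : Type*} [Mul R] (u : ι → R) (v : ν → R) : ι × ν → R :=
  fun p => u p.1 * v p.2

theorem prodVec_ne_zero {R ι ν : Type*} [MulZeroClass R] [NoZeroDivisors R] {u : ι → R}
    {v : ν → R} (hu : u ≠ 0) (hv : v ≠ 0) : prodVec u v ≠ 0 := by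
  obtain ⟨i, hi⟩ := Function.ne_iff.1 hu
  obtain ⟨l, hl⟩ := Function.ne_iff.1 hv
  exact Function.ne_iff.2 ⟨(i, l), mul_ne_zero hi hl⟩

section ProductVectors

variable {K ι ν : Type*} [Field K] [IsAlgClosed K] [Fintype ι] [DecidableEq ι] [Nontrivial ι]
  [Fintype ν] [DecidableEq ν] [Nonempty ν]

theorem exists_prodVec_dotProduct_eq_zero (w : ν → ι × ν → K) :
    ∃ u v, u ≠ 0 ∧ v ≠ 0 ∧ ∀ k, w k ⬝ᵥ prodVec u v = 0 := by
  obtain ⟨i₀, i₁, hi⟩ := exists_pair_ne ι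
  obtain ⟨s, t, hst, v, hv, hpencil⟩ := exists_mulVec_smul_add_smul_eq_zero
    (of fun k l => w k (i₀, l)) (of fun k l => w k (i₁, l))
  refine ⟨Pi.single i₀ s + Pi.single i₁ t, v, ?_, hv, fun k => ?_⟩
  · intro h
    have h₀ := congrFun h i₀
    have h₁ := congrFun h i₁
    simp only [Pi.add_apply, Pi.single_eq_same, Pi.single_eq_of_ne hi, Pi.single_eq_of_ne hi.symm,
      Pi.zero_apply, add_zero, zero_add] at h₀ h₁
    exact hst (by simp [h₀, h₁])
  · refine Eq.trans ?_ (congrFun hpencil k)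
    simp [prodVec, dotProduct, mulVec, Fintype.sum_prod_type_right, Pi.single_apply, add_mul,
      mul_add, Finset.sum_add_distrib, mul_assoc, mul_left_comm]

theorem exists_prodVec_dotProduct_eq_zero_of_card_le {κ : Type*} [Fintype κ]
    (w : κ → ι × ν → K) (hκ : Fintype.card κ ≤ Fintype.card ν) :
    ∃ u v, u ≠ 0 ∧ v ≠ 0 ∧ ∀ k, w k ⬝ᵥ prodVec u v = 0 := by
  obtain ⟨e⟩ := Function.Embedding.nonempty_of_card_le hκ
  obtain ⟨u, v, hu, hv, horth⟩ := exists_prodVec_dotProduct_eq_zero (Function.extend e w 0)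
  exact ⟨u, v, hu, hv, fun k => by simpa [e.injective.extend_apply] using horth (e k)⟩

end ProductVectors

theorem star_prodVec_dotProduct_ptrans_mulVec {m n : ℕ}
    (M : Matrix (Fin m × Fin n) (Fin m × Fin n) ℂ) (u : Fin m → ℂ) (v : Fin n → ℂ) :
    star (prodVec u v) ⬝ᵥ (ptrans M *ᵥ prodVec u v) =
      star (prodVec (star u) v) ⬝ᵥ (M *ᵥ prodVec (star u) v) := by
  simp only [dotProduct, mulVec, Finset.mul_sum]
  rw [← Fintype.sum_prod_type', ← Fintype.sum_prod_type']
  refine Fintype.sum_bijective (fun x => ((x.2.1, x.1.2), (x.1.1, x.2.2)))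
    (Function.Involutive.bijective fun _ => rfl) _ _ fun x => ?_
  simp only [ptrans, prodVec, of_apply, Pi.star_apply, star_mul', star_star]
  ring

namespace Matrix.IsHermitian

variable {𝕜 n : Type*} [RCLike 𝕜] [Fintype n] [DecidableEq n] {A : Matrix n n 𝕜}

theorem star_dotProduct_mulVec_eq_sum (hA : A.IsHermitian) (x : n → 𝕜) :
    star x ⬝ᵥ (A *ᵥ x) = ((∑ i, hA.eigenvalues i *
      ‖(star (hA.eigenvectorUnitary : Matrix n n 𝕜) *ᵥ x) i‖ ^ 2 : ℝ) : 𝕜) := by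
  set U : Matrix n n 𝕜 := (hA.eigenvectorUnitary : Matrix n n 𝕜)
  set c := star U *ᵥ x
  have hstar : star x ᵥ* U = star c := by
    rw [star_mulVec, star_eq_conjTranspose, conjTranspose_conjTranspose]
  conv_lhs => rw [hA.spectral_theorem, Unitary.conjStarAlgAut_apply]
  rw [← mulVec_mulVec, ← mulVec_mulVec, dotProduct_mulVec, hstar]
  change star c ⬝ᵥ (diagonal _ *ᵥ c) = _
  simp only [dotProduct, mulVec_diagonal]
  push_cast
  refine Finset.sum_congr rfl fun i _ => ?_
  rw [← RCLike.mul_conj]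
  simp only [Pi.star_apply, Function.comp_apply, RCLike.star_def]
  ring

theorem star_dotProduct_mulVec_neg (hA : A.IsHermitian) {x : n → 𝕜} (hx : x ≠ 0)
    (horth : ∀ i, 0 ≤ hA.eigenvalues i →
      (star (hA.eigenvectorUnitary : Matrix n n 𝕜) *ᵥ x) i = 0) :
    star x ⬝ᵥ (A *ᵥ x) < 0 := by
  have hc : star (hA.eigenvectorUnitary : Matrix n n 𝕜) *ᵥ x ≠ 0 := by
    intro h
    apply hx
    rw [← one_mulVec x, ← Unitary.coe_mul_star_self hA.eigenvectorUnitary, ← mulVec_mulVec,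
      Unitary.coe_star, h, mulVec_zero]
  obtain ⟨i₀, hi₀⟩ := Function.ne_iff.1 hc
  have hneg₀ : hA.eigenvalues i₀ < 0 := not_le.1 fun h => hi₀ (horth i₀ h)
  rw [hA.star_dotProduct_mulVec_eq_sum, RCLike.ofReal_lt_zero]
  refine Finset.sum_neg' (fun i _ => ?_) ⟨i₀, Finset.mem_univ _, ?_⟩
  · by_cases hi : 0 ≤ hA.eigenvalues i
    · simp [horth i hi]
    · exact mul_nonpos_of_nonpos_of_nonneg (not_le.1 hi).le (by positivity)
  · exact mul_neg_of_neg_of_pos hneg₀ (pow_pos (norm_pos_iff.2 hi₀) 2)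

end Matrix.IsHermitian

theorem Matrix.PosSemidef.lt_card_nonneg_eigenvalues_ptrans {m n : ℕ} [NeZero n] (hm : 2 ≤ m)
    {M : Matrix (Fin m × Fin n) (Fin m × Fin n) ℂ} (hM : M.PosSemidef)
    (hΓ : (ptrans M).IsHermitian) :
    n < (Finset.univ.filter fun i => 0 ≤ hΓ.eigenvalues i).card := by
  by_contra! h
  have : Nontrivial (Fin m) := Fin.nontrivial_iff_two_le.2 hm
  obtain ⟨u, v, hu, hv, horth⟩ := exists_prodVec_dotProduct_eq_zero_of_card_le (ι := Fin m) (ν := Fin n)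
    (fun i : {i // 0 ≤ hΓ.eigenvalues i} => star (hΓ.eigenvectorUnitary : Matrix _ _ ℂ) i.1)
    (by simpa [Fintype.card_subtype] using h)
  have hneg := hΓ.star_dotProduct_mulVec_neg (prodVec_ne_zero hu hv) fun i hi => horth ⟨i, hi⟩
  rw [star_prodVec_dotProduct_ptrans_mulVec] at hneg
  exact (hM.dotProduct_mulVec_nonneg _).not_gt hneg

theorem iZero_add_iPos {ι : Type} [Fintype ι] [DecidableEq ι] {M : Matrix ι ι ℂ}
    (hM : M.IsHermitian) :
    iZero hM + iPos hM = (Finset.univ.filter fun i => 0 ≤ hM.eigenvalues i).card := by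
  rw [iZero, iPos, ← Finset.card_union_of_disjoint, ← Finset.filter_or]
  · simp only [le_iff_eq_or_lt, eq_comm]
  · exact Finset.disjoint_filter.2 fun i _ h => h ▸ lt_irrefl _

/-- There is no 3×4 state whose partial transpose has inertia (8,0,4),
nor one with inertia (8,1,3), nor one with inertia (9,0,3). -/
theorem no_inertia_804_813_903 :
    (¬ ∃ (M : Matrix (Fin 3 × Fin 4) (Fin 3 × Fin 4) ℂ)
        (hΓ : (ptrans M).IsHermitian),
      M.PosSemidef ∧ iNeg hΓ = 8 ∧ iZero hΓ = 0 ∧ iPos hΓ = 4) ∧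
    (¬ ∃ (M : Matrix (Fin 3 × Fin 4) (Fin 3 × Fin 4) ℂ)
        (hΓ : (ptrans M).IsHermitian),
      M.PosSemidef ∧ iNeg hΓ = 8 ∧ iZero hΓ = 1 ∧ iPos hΓ = 3) ∧
    (¬ ∃ (M : Matrix (Fin 3 × Fin 4) (Fin 3 × Fin 4) ℂ)
        (hΓ : (ptrans M).IsHermitian),
      M.PosSemidef ∧ iNeg hΓ = 9 ∧ iZero hΓ = 0 ∧ iPos hΓ = 3) := by
  have key : ∀ (M : Matrix (Fin 3 × Fin 4) (Fin 3 × Fin 4) ℂ) (hΓ : (ptrans M).IsHermitian),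
      M.PosSemidef → 4 < iZero hΓ + iPos hΓ := fun M hΓ hM => by
    rw [iZero_add_iPos]
    exact hM.lt_card_nonneg_eigenvalues_ptrans (by norm_num) hΓ
  refine ⟨?_, ?_, ?_⟩ <;> rintro ⟨M, hΓ, hM, -, hZ, hP⟩ <;> have := key M hΓ hM <;> omega
end

section
/- Let φ = β ⊗ α, where β ∈ ℝ^m is a vector with real entries and α ∈ ℂ^n, and let M be an (mn)×(mn) Hermitian complex matrix. If M is positive semidefinite and M^Γ φ = 0, then M φ = 0. -/
open Matrix Kronecker
open scoped ComplexOrder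

/-- The self-inverse equivalence swapping the first components of a pair of pairs. -/
def swapFirst {m n : ℕ} :
    ((Fin m × Fin n) × (Fin m × Fin n)) ≃ ((Fin m × Fin n) × (Fin m × Fin n)) where
  toFun x := ((x.2.1, x.1.2), (x.1.1, x.2.2))
  invFun x := ((x.2.1, x.1.2), (x.1.1, x.2.2))
  left_inv x := rfl
  right_inv x := rfl

/-- For a product vector `φ = β ⊗ α` with `β` real and a PSD matrix `M`,
if `M^Γ φ = 0` then `M φ = 0`. -/
theorem product_vector_ker_ptrans {m n : ℕ}
    (β : Fin m → ℝ) (α : Fin n → ℂ)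
    (M : Matrix (Fin m × Fin n) (Fin m × Fin n) ℂ)
    (hM : M.IsHermitian) (hMpsd : M.PosSemidef) :
    let φ : Fin m × Fin n → ℂ := fun p => (β p.1 : ℂ) * α p.2
    ptrans M *ᵥ φ = 0 → M *ᵥ φ = 0 := by
  intro φ h
  rw [← hMpsd.dotProduct_mulVec_zero_iff]
  have key : star φ ⬝ᵥ M *ᵥ φ = star φ ⬝ᵥ ptrans M *ᵥ φ := by
    simp only [dotProduct, mulVec, ptrans, Matrix.of_apply, dotProduct, Finset.mul_sum]
    rw [← Finset.sum_product', ← Finset.sum_product']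
    refine (Fintype.sum_equiv swapFirst _ _ ?_).symm
    rintro ⟨⟨i, k⟩, ⟨j, l⟩⟩
    simp only [swapFirst, Equiv.coe_fn_mk, φ, Pi.star_apply, star_mul', RCLike.star_def,
      Complex.conj_ofReal]
    ring
  rw [key, h, dotProduct_zero]
end

section
/- Let M be an n×n Hermitian complex matrix, let P be any n×n complex matrix, and set X = P M P†. Then i_+(M) ≥ i_+(X) and i_-(M) ≥ i_-(X); that is, the numbers of positive and of negative eigenvalues do not increase under the transformation M ↦ P M P†. -/
/-!
Diagonalising `M` and `X = P M P†` by unitaries turns the relation into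
`diag μ = Q† diag λ Q` with `Q = V† P† U`, so that `∑ μᵢ |xᵢ|² = ∑ λⱼ |(Q x)ⱼ|²` for every `x`.
For nonzero `x` supported on `{μ > 0}` the left side is positive, so `Q x` cannot vanish on
`{λ > 0}`: the map `x ↦ (Q x)|_{λ > 0}` is injective on a space of dimension `#{μ > 0}`.
Replacing `λ, μ` by `-λ, -μ` gives the bound for the negative eigenvalues.
-/

open Matrix Kronecker
open scoped ComplexOrder

open Finset

namespace Matrix

lemma diagonal_ofReal_comp_neg {n : Type*} [DecidableEq n] (f : n → ℝ) :
    diagonal ((↑) ∘ (-f) : n → ℂ) = -diagonal ((↑) ∘ f : n → ℂ) := by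
  rw [diagonal_neg]
  congr 1
  ext
  simp

variable {m n : Type*} [Fintype m] [Fintype n] [DecidableEq m] [DecidableEq n]

lemma star_dotProduct_diagonal_ofReal_mulVec (f : n → ℝ) (x : n → ℂ) :
    star x ⬝ᵥ (diagonal ((↑) ∘ f : n → ℂ) *ᵥ x) = ((∑ j, f j * Complex.normSq (x j) : ℝ) : ℂ) := by
  simp only [dotProduct, mulVec_diagonal, Function.comp_apply, Pi.star_apply,
    Complex.ofReal_sum, Complex.ofReal_mul, Complex.normSq_eq_conj_mul_self, Complex.star_def]
  exact sum_congr rfl fun j _ => by ring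

lemma sum_mul_normSq_eq_of_diagonal_eq {d : m → ℝ} {e : n → ℝ} {Q : Matrix m n ℂ}
    (h : diagonal ((↑) ∘ e : n → ℂ) = Qᴴ * diagonal ((↑) ∘ d : m → ℂ) * Q) (x : n → ℂ) :
    ∑ i, e i * Complex.normSq (x i) = ∑ j, d j * Complex.normSq ((Q *ᵥ x) j) := by
  have := star_dotProduct_diagonal_ofReal_mulVec e x
  rw [h, ← mulVec_mulVec, ← mulVec_mulVec, dotProduct_mulVec, ← star_mulVec,
    star_dotProduct_diagonal_ofReal_mulVec] at this
  exact_mod_cast this.symm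

lemma eq_zero_of_diagonal_eq {d : m → ℝ} {e : n → ℝ} {Q : Matrix m n ℂ}
    (h : diagonal ((↑) ∘ e : n → ℂ) = Qᴴ * diagonal ((↑) ∘ d : m → ℂ) * Q) {x : n → ℂ}
    (hx : ∀ i, e i ≤ 0 → x i = 0) (hQx : ∀ j, 0 < d j → (Q *ᵥ x) j = 0) : x = 0 := by
  have hterm_nonneg : ∀ i, 0 ≤ e i * Complex.normSq (x i) := fun i => by
    rcases le_or_gt (e i) 0 with he | he
    · simp [hx i he]
    · exact mul_nonneg he.le (Complex.normSq_nonneg _)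
  have hsum_nonpos : ∑ j, d j * Complex.normSq ((Q *ᵥ x) j) ≤ 0 :=
    sum_nonpos fun j _ => by
      rcases le_or_gt (d j) 0 with hd | hd
      · exact mul_nonpos_of_nonpos_of_nonneg hd (Complex.normSq_nonneg _)
      · simp [hQx j hd]
  rw [← sum_mul_normSq_eq_of_diagonal_eq h] at hsum_nonpos
  have hterm_zero := (sum_eq_zero_iff_of_nonneg fun i _ => hterm_nonneg i).1
    (hsum_nonpos.antisymm (sum_nonneg fun i _ => hterm_nonneg i))
  funext i
  rcases le_or_gt (e i) 0 with he | he
  · exact hx i he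
  · simpa [he.ne'] using hterm_zero i (mem_univ i)

lemma card_filter_pos_le_of_diagonal_eq {d : m → ℝ} {e : n → ℝ} {Q : Matrix m n ℂ}
    (h : diagonal ((↑) ∘ e : n → ℂ) = Qᴴ * diagonal ((↑) ∘ d : m → ℂ) * Q) :
    #{i | 0 < e i} ≤ #{j | 0 < d j} := by
  let S := {i // 0 < e i}
  let T := {j // 0 < d j}
  let f : (S → ℂ) →ₗ[ℂ] T → ℂ := LinearMap.funLeft ℂ ℂ Subtype.val ∘ₗ Q.mulVecLin ∘ₗ
    Function.ExtendByZero.linearMap ℂ Subtype.val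
  have hf : Function.Injective f := by
    rw [← LinearMap.ker_eq_bot, LinearMap.ker_eq_bot']
    intro c hc
    have hx : Function.extend Subtype.val c 0 = 0 := by
      refine eq_zero_of_diagonal_eq h (fun i he => ?_) fun j hd => congrFun hc ⟨j, hd⟩
      exact Function.extend_apply' _ _ _ fun ⟨s, hs⟩ => (s.2.trans_le (hs ▸ he)).false
    funext s
    simpa [Subtype.val_injective.extend_apply] using congrFun hx s
  have := LinearMap.finrank_le_finrank_of_injective hf
  rwa [Module.finrank_fintype_fun_eq_card, Module.finrank_fintype_fun_eq_card,
    Fintype.card_subtype, Fintype.card_subtype] at this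

lemma card_filter_neg_le_of_diagonal_eq {d : m → ℝ} {e : n → ℝ} {Q : Matrix m n ℂ}
    (h : diagonal ((↑) ∘ e : n → ℂ) = Qᴴ * diagonal ((↑) ∘ d : m → ℂ) * Q) :
    #{i | e i < 0} ≤ #{j | d j < 0} := by
  have h' : diagonal ((↑) ∘ (-e) : n → ℂ) = Qᴴ * diagonal ((↑) ∘ (-d) : m → ℂ) * Q := by
    rw [diagonal_ofReal_comp_neg, diagonal_ofReal_comp_neg, h, Matrix.mul_neg, Matrix.neg_mul]
  simpa only [Pi.neg_apply, neg_pos] using card_filter_pos_le_of_diagonal_eq h'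

lemma IsHermitian.exists_diagonal_eigenvalues_conj_eq {A : Matrix n n ℂ} (hA : A.IsHermitian)
    (P : Matrix m n ℂ) (hB : (P * A * Pᴴ).IsHermitian) :
    ∃ Q : Matrix n m ℂ, diagonal ((↑) ∘ hB.eigenvalues : m → ℂ) =
      Qᴴ * diagonal ((↑) ∘ hA.eigenvalues : n → ℂ) * Q := by
  let U : Matrix m m ℂ := hB.eigenvectorUnitary
  let V : Matrix n n ℂ := hA.eigenvectorUnitary
  refine ⟨Vᴴ * Pᴴ * U, ?_⟩
  have hA_eq : A = V * diagonal ((↑) ∘ hA.eigenvalues) * Vᴴ := hA.spectral_theorem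
  have hB_diag : Uᴴ * (P * A * Pᴴ) * U = diagonal ((↑) ∘ hB.eigenvalues) := by
    simpa [Unitary.conjStarAlgAut_apply, star_eq_conjTranspose] using
      hB.conjStarAlgAut_star_eigenvectorUnitary
  calc diagonal ((↑) ∘ hB.eigenvalues : m → ℂ)
      = Uᴴ * (P * (V * diagonal ((↑) ∘ hA.eigenvalues) * Vᴴ) * Pᴴ) * U := by
        rw [← hB_diag, ← hA_eq]
    _ = (Vᴴ * Pᴴ * U)ᴴ * diagonal ((↑) ∘ hA.eigenvalues : n → ℂ) * (Vᴴ * Pᴴ * U) := by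
        simp only [conjTranspose_mul, conjTranspose_conjTranspose, Matrix.mul_assoc]

end Matrix

/-- The numbers of positive and negative eigenvalues do not increase under
`M ↦ P M P†`. -/
theorem inertia_conj_le {n : ℕ} (M P : Matrix (Fin n) (Fin n) ℂ)
    (hM : M.IsHermitian) (hX : (P * M * Pᴴ).IsHermitian) :
    iPos hX ≤ iPos hM ∧ iNeg hX ≤ iNeg hM := by
  obtain ⟨Q, hQ⟩ := hM.exists_diagonal_eigenvalues_conj_eq P hX
  exact ⟨card_filter_pos_le_of_diagonal_eq hQ, card_filter_neg_le_of_diagonal_eq hQ⟩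
end

section
/- Let A and B be n×n Hermitian complex matrices and, for 1 ≤ s ≤ n, let A_s and B_s denote their order-s leading principal submatrices. If for every 1 ≤ s ≤ n the determinants det(A_s) and det(B_s) are both nonzero and have the same sign, then A and B have the same inertia. -/
open Matrix Kronecker
open scoped ComplexOrder

/-!
Write `A_s` for the leading principal submatrices and `d_s = det A_s`, with `d_0 = 1`. When
`d_{s-1} ≠ 0`, the block `LDLᴴ` factorisation through the Schur complement of `A_{s-1}` in `A_s`
shows that `A_s` is congruent to `A_{s-1} ⊕ (d_s / d_{s-1})`. Sylvester's law of inertia then gives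
`In A_s = In A_{s-1} + In (d_s / d_{s-1})`, so the inertia of `A` is determined by the signs of the
ratios `d_s / d_{s-1}`, and these are the same for `A` and `B`.
-/

open Finset

theorem Matrix.exists_ne_zero_mulVec_apply_eq_zero {K : Type*} [Field K] {ι α β : Type*}
    [Fintype ι] (P : Matrix α ι K) (Q : Matrix β ι K) (s : Finset α) (t : Finset β)
    (hst : #s + #t < Fintype.card ι) :
    ∃ x : ι → K, x ≠ 0 ∧ (∀ i ∈ s, (P *ᵥ x) i = 0) ∧ ∀ j ∈ t, (Q *ᵥ x) j = 0 := by
  let L : (ι → K) →ₗ[K] (s → K) × (t → K) :=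
    ((LinearMap.funLeft K K (↑)).comp P.mulVecLin).prod
      ((LinearMap.funLeft K K (↑)).comp Q.mulVecLin)
  have hL : LinearMap.ker L ≠ ⊥ := LinearMap.ker_ne_bot_of_finrank_lt (by simpa using hst)
  obtain ⟨x, hx, hx0⟩ := Submodule.exists_mem_ne_zero_of_ne_bot hL
  have hLx : L x = 0 := hx
  exact ⟨x, hx0, fun i hi => congrFun (congrArg Prod.fst hLx) ⟨i, hi⟩,
    fun j hj => congrFun (congrArg Prod.snd hLx) ⟨j, hj⟩⟩

theorem sum_mul_norm_sq_pos_of_ne_zero {𝕜 : Type*} [RCLike 𝕜] {ι : Type*} [Fintype ι]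
    {f : ι → ℝ} {y : ι → 𝕜} (hy : y ≠ 0) (hfy : ∀ i, f i ≤ 0 → y i = 0) :
    0 < ∑ i, f i * ‖y i‖ ^ 2 := by
  obtain ⟨i₀, hi₀⟩ := Function.ne_iff.mp hy
  have hf₀ : 0 < f i₀ := by
    by_contra! h
    exact hi₀ (hfy i₀ h)
  refine sum_pos' (fun i _ => ?_) ⟨i₀, mem_univ _, by positivity⟩
  by_cases hfi : f i ≤ 0
  · simp [hfy i hfi]
  · exact mul_nonneg (not_le.mp hfi).le (sq_nonneg _)

namespace Matrix.IsHermitian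

variable {𝕜 : Type*} [RCLike 𝕜] {ι : Type*} [Fintype ι] [DecidableEq ι] {M : Matrix ι ι 𝕜}

theorem re_star_dotProduct_mulVec (hM : M.IsHermitian) (x : ι → 𝕜) :
    RCLike.re (star x ⬝ᵥ M *ᵥ x) =
      ∑ i, hM.eigenvalues i * ‖(star (hM.eigenvectorUnitary : Matrix ι ι 𝕜) *ᵥ x) i‖ ^ 2 := by
  set y := star (hM.eigenvectorUnitary : Matrix ι ι 𝕜) *ᵥ x
  have hy : star x ⬝ᵥ M *ᵥ x = star y ⬝ᵥ diagonal (RCLike.ofReal ∘ hM.eigenvalues) *ᵥ y := by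
    conv_lhs => rw [hM.spectral_theorem]
    rw [Unitary.conjStarAlgAut_apply, ← mulVec_mulVec, ← mulVec_mulVec, dotProduct_mulVec,
      star_mulVec, ← star_eq_conjTranspose, star_star]
  rw [hy, dotProduct, map_sum]
  refine sum_congr rfl fun i _ => ?_
  rw [mulVec_diagonal, Pi.star_apply, Function.comp_apply, mul_left_comm, RCLike.star_def,
    RCLike.conj_mul, ← RCLike.ofReal_pow, ← RCLike.ofReal_mul, RCLike.ofReal_re]

theorem card_pos_mul_eigenvalues_le_of_conj (c : ℝ) (hM : M.IsHermitian) {C : Matrix ι ι 𝕜}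
    (hC : IsUnit C.det) {N : Matrix ι ι 𝕜} (hN : N.IsHermitian) (hNM : N = Cᴴ * M * C) :
    #{i | 0 < c * hM.eigenvalues i} ≤ #{i | 0 < c * hN.eigenvalues i} := by
  subst hNM
  by_contra! hlt
  have hcard : #{i | ¬ 0 < c * hM.eigenvalues i} + #{i | 0 < c * hN.eigenvalues i} <
      Fintype.card ι := by
    have := card_filter_add_card_filter_not (s := univ) (p := fun i => 0 < c * hM.eigenvalues i)
    rw [card_univ] at this
    omega
  -- By a dimension count, some `x ≠ 0` has `Cx` in the span of the eigenvectors of `M` with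
  -- `c λ > 0` and `x` in the span of those of `CᴴMC` with `c μ ≤ 0`; then `c x*(CᴴMC)x` is both
  -- positive and nonpositive.
  obtain ⟨x, hx0, hz, hw⟩ := exists_ne_zero_mulVec_apply_eq_zero
    (star (hM.eigenvectorUnitary : Matrix ι ι 𝕜) * C)
    (star (hN.eigenvectorUnitary : Matrix ι ι 𝕜)) _ _ hcard
  have hform : star x ⬝ᵥ (Cᴴ * M * C) *ᵥ x = star (C *ᵥ x) ⬝ᵥ M *ᵥ (C *ᵥ x) := by
    rw [← mulVec_mulVec, ← mulVec_mulVec, dotProduct_mulVec (star x), ← star_mulVec]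
  have hz0 : (star (hM.eigenvectorUnitary : Matrix ι ι 𝕜) * C) *ᵥ x ≠ 0 := by
    have hUC :=
      (isUnit_det_of_right_inverse (Unitary.coe_star_mul_self hM.eigenvectorUnitary)).mul hC
    rw [← det_mul, ← isUnit_iff_isUnit_det, ← mulVec_injective_iff_isUnit] at hUC
    exact fun h => hx0 (hUC (h.trans (mulVec_zero _).symm))
  have hpos : 0 < c * RCLike.re (star (C *ᵥ x) ⬝ᵥ M *ᵥ (C *ᵥ x)) := by
    rw [hM.re_star_dotProduct_mulVec, mul_sum, mulVec_mulVec]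
    simp only [← mul_assoc]
    exact sum_mul_norm_sq_pos_of_ne_zero hz0 fun i hi => hz i (by simpa using hi)
  have hnonpos : c * RCLike.re (star x ⬝ᵥ (Cᴴ * M * C) *ᵥ x) ≤ 0 := by
    rw [hN.re_star_dotProduct_mulVec, mul_sum]
    refine sum_nonpos fun i _ => ?_
    rw [← mul_assoc]
    by_cases hi : 0 < c * hN.eigenvalues i
    · simp [hw i (by simpa using hi)]
    · exact mul_nonpos_of_nonpos_of_nonneg (not_lt.mp hi) (sq_nonneg _)
  rw [hform] at hnonpos
  linarith

theorem card_pos_mul_eigenvalues_conj (c : ℝ) (hM : M.IsHermitian) {C : Matrix ι ι 𝕜}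
    (hC : IsUnit C.det) {N : Matrix ι ι 𝕜} (hN : N.IsHermitian) (hNM : N = Cᴴ * M * C) :
    #{i | 0 < c * hN.eigenvalues i} = #{i | 0 < c * hM.eigenvalues i} := by
  have hC' : IsUnit Cᴴ.det := by rw [det_conjTranspose]; exact hC.star
  refine le_antisymm (card_pos_mul_eigenvalues_le_of_conj c hN (isUnit_nonsing_inv_det C hC) hM ?_)
    (card_pos_mul_eigenvalues_le_of_conj c hM hC hN hNM)
  rw [hNM, conjTranspose_nonsing_inv, Matrix.mul_assoc Cᴴ⁻¹, mul_nonsing_inv_cancel_right _ _ hC,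
    nonsing_inv_mul_cancel_left _ _ hC']

theorem card_eigenvalues_eq_zero_add_rank (hM : M.IsHermitian) :
    #{i | hM.eigenvalues i = 0} + M.rank = Fintype.card ι := by
  rw [hM.rank_eq_card_non_zero_eigs, Fintype.card_subtype, ← card_univ]
  exact card_filter_add_card_filter_not _

theorem card_eigenvalues_eq_zero_conj (hM : M.IsHermitian) {C : Matrix ι ι 𝕜}
    (hC : IsUnit C.det) {N : Matrix ι ι 𝕜} (hN : N.IsHermitian) (hNM : N = Cᴴ * M * C) :
    #{i | hN.eigenvalues i = 0} = #{i | hM.eigenvalues i = 0} := by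
  have hrank : N.rank = M.rank := by
    rw [hNM, rank_mul_eq_left_of_isUnit_det _ _ hC, rank_mul_eq_right_of_isUnit_det _ _
      (by rw [det_conjTranspose]; exact hC.star)]
  have h₁ := hN.card_eigenvalues_eq_zero_add_rank
  have h₂ := hM.card_eigenvalues_eq_zero_add_rank
  omega

theorem map_eigenvalues_eq_map_re_roots_charpoly (hM : M.IsHermitian) :
    univ.val.map hM.eigenvalues = M.charpoly.roots.map RCLike.re := by
  rw [hM.roots_charpoly_eq_eigenvalues, Multiset.map_map]
  simp

end Matrix.IsHermitian

noncomputable def Multiset.signCounts (m : Multiset ℝ) : ℕ × ℕ × ℕ :=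
  (m.countP (· < 0), m.countP (· = 0), m.countP (0 < ·))

theorem Multiset.signCounts_add (s t : Multiset ℝ) :
    (s + t).signCounts = s.signCounts + t.signCounts := by
  simp [signCounts, countP_add]

theorem Multiset.signCounts_singleton_eq_of_mul_pos {a b : ℝ} (hab : 0 < a * b) :
    ({a} : Multiset ℝ).signCounts = ({b} : Multiset ℝ).signCounts := by
  rcases pos_and_pos_or_neg_and_neg_of_mul_pos hab with ⟨ha, hb⟩ | ⟨ha, hb⟩
  · simp [signCounts, ← cons_zero, ha, hb, ha.not_gt, hb.not_gt, ha.ne', hb.ne']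
  · simp [signCounts, ← cons_zero, ha, hb, ha.not_gt, hb.not_gt, ha.ne, hb.ne]

abbrev Matrix.leadingSubmatrix {α : Type*} {n s : ℕ} (A : Matrix (Fin n) (Fin n) α)
    (hs : s ≤ n) : Matrix (Fin s) (Fin s) α :=
  A.submatrix (Fin.castLE hs) (Fin.castLE hs)

namespace Matrix.IsHermitian

variable {ι κ : Type} [Fintype ι] [DecidableEq ι] [Fintype κ] [DecidableEq κ]

noncomputable def inertia {M : Matrix ι ι ℂ} (hM : M.IsHermitian) : ℕ × ℕ × ℕ :=
  (iNeg hM, iZero hM, iPos hM)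

theorem inertia_eq_signCounts {M : Matrix ι ι ℂ} (hM : M.IsHermitian) :
    hM.inertia = (M.charpoly.roots.map RCLike.re).signCounts := by
  rw [← hM.map_eigenvalues_eq_map_re_roots_charpoly]
  simp [inertia, iNeg, iZero, iPos, Multiset.signCounts, Multiset.countP_map, Finset.card]

theorem inertia_submatrix_equiv {M : Matrix ι ι ℂ} (hM : M.IsHermitian) (e : κ ≃ ι)
    {N : Matrix κ κ ℂ} (hN : N.IsHermitian) (hNM : N = M.submatrix e e) :
    hN.inertia = hM.inertia := by
  subst hNM
  rw [inertia_eq_signCounts, inertia_eq_signCounts, ← charpoly_reindex e.symm M]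
  rfl

theorem inertia_fromBlocks_zero {M₁ : Matrix ι ι ℂ} {M₂ : Matrix κ κ ℂ} (h₁ : M₁.IsHermitian)
    (h₂ : M₂.IsHermitian) (h : (Matrix.fromBlocks M₁ 0 0 M₂).IsHermitian) :
    h.inertia = h₁.inertia + h₂.inertia := by
  rw [inertia_eq_signCounts, inertia_eq_signCounts, inertia_eq_signCounts,
    charpoly_fromBlocks_zero₂₁,
    Polynomial.roots_mul (M₁.charpoly_monic.mul M₂.charpoly_monic).ne_zero, Multiset.map_add,
    Multiset.signCounts_add]

theorem inertia_of_unique [Unique κ] {M : Matrix κ κ ℂ} (hM : M.IsHermitian) :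
    hM.inertia = ({RCLike.re (M default default)} : Multiset ℝ).signCounts := by
  rw [inertia_eq_signCounts, Matrix.charpoly, det_unique, charmatrix_apply_eq,
    Polynomial.roots_X_sub_C, Multiset.map_singleton]

theorem inertia_conj {M : Matrix ι ι ℂ} (hM : M.IsHermitian) {C : Matrix ι ι ℂ}
    (hC : IsUnit C.det) {N : Matrix ι ι ℂ} (hN : N.IsHermitian) (hNM : N = Cᴴ * M * C) :
    hN.inertia = hM.inertia := by
  have hneg := card_pos_mul_eigenvalues_conj (-1) hM hC hN hNM
  have hpos := card_pos_mul_eigenvalues_conj 1 hM hC hN hNM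
  simp only [neg_one_mul, neg_pos, one_mul] at hneg hpos
  simp only [inertia, iNeg, iZero, iPos, hneg, hpos, card_eigenvalues_eq_zero_conj hM hC hN hNM]

theorem inertia_fromBlocks {A : Matrix ι ι ℂ} {B : Matrix ι κ ℂ} {D : Matrix κ κ ℂ}
    (hA : A.IsHermitian) (hAdet : IsUnit A.det) (hS : (D - Bᴴ * A⁻¹ * B).IsHermitian)
    (hM : (Matrix.fromBlocks A B Bᴴ D).IsHermitian) :
    hM.inertia = hA.inertia + hS.inertia := by
  let _ := invertibleOfIsUnitDet A hAdet
  set L : Matrix (ι ⊕ κ) (ι ⊕ κ) ℂ := Matrix.fromBlocks 1 (A⁻¹ * B) 0 1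
  have hLdet : IsUnit L.det := by simp [L]
  have hLDL :
      Matrix.fromBlocks A B Bᴴ D = Lᴴ * Matrix.fromBlocks A 0 0 (D - Bᴴ * A⁻¹ * B) * L := by
    have hAinv : (A⁻¹)ᴴ = A⁻¹ := by rw [conjTranspose_nonsing_inv, hA.eq]
    simpa [L, fromBlocks_conjTranspose, conjTranspose_mul, hAinv, invOf_eq_nonsing_inv]
      using fromBlocks_eq_of_invertible₁₁ A B Bᴴ D
  have hblk : (Matrix.fromBlocks A 0 0 (D - Bᴴ * A⁻¹ * B)).IsHermitian :=
    isHermitian_fromBlocks_iff.mpr ⟨hA, by simp, by simp, hS⟩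
  rw [inertia_conj hblk hLdet hM hLDL, inertia_fromBlocks_zero hA hS]

theorem exists_det_eq_mul_inertia_eq_add_of_unique [Unique κ] {A : Matrix ι ι ℂ}
    {B : Matrix ι κ ℂ} {D : Matrix κ κ ℂ} (hA : A.IsHermitian) (hAdet : IsUnit A.det)
    (hM : (Matrix.fromBlocks A B Bᴴ D).IsHermitian) :
    ∃ a : ℝ, (Matrix.fromBlocks A B Bᴴ D).det = A.det * a ∧
      hM.inertia = hA.inertia + ({a} : Multiset ℝ).signCounts := by
  have hS := (IsHermitian.fromBlocks₁₁ _ _ hA).mp hM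
  refine ⟨RCLike.re ((D - Bᴴ * A⁻¹ * B) default default), ?_, ?_⟩
  · let _ := invertibleOfIsUnitDet A hAdet
    rw [det_fromBlocks₁₁, det_unique (D - _), invOf_eq_nonsing_inv]
    exact congrArg _ (hS.coe_re_apply_self default).symm
  · rw [← inertia_of_unique hS, inertia_fromBlocks hA hAdet hS]

theorem exists_det_eq_mul_inertia_eq_add {n : ℕ} {A : Matrix (Fin (n + 1)) (Fin (n + 1)) ℂ}
    (hA : A.IsHermitian) (hA' : (A.leadingSubmatrix n.le_succ).IsHermitian)
    (hdet : (A.leadingSubmatrix n.le_succ).det ≠ 0) :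
    ∃ a : ℝ, A.det = (A.leadingSubmatrix n.le_succ).det * a ∧
      hA.inertia = hA'.inertia + ({a} : Multiset ℝ).signCounts := by
  let e : Fin n ⊕ Fin 1 ≃ Fin (n + 1) := finSumFinEquiv
  have hblk : A.submatrix e e = Matrix.fromBlocks (A.leadingSubmatrix n.le_succ)
      (A.submatrix e e).toBlocks₁₂ (A.submatrix e e).toBlocks₁₂ᴴ (A.submatrix e e).toBlocks₂₂ := by
    have hM := (A.submatrix e e).fromBlocks_toBlocks ▸ hA.submatrix e
    rw [(isHermitian_fromBlocks_iff.mp hM).2.1]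
    exact (A.submatrix e e).fromBlocks_toBlocks.symm
  have hM := hblk ▸ hA.submatrix e
  obtain ⟨a, hdetM, hinM⟩ :=
    exists_det_eq_mul_inertia_eq_add_of_unique hA' (isUnit_iff_ne_zero.mpr hdet) hM
  refine ⟨a, ?_, ?_⟩
  · rw [← det_submatrix_equiv_self e, hblk, hdetM]
  · rw [← inertia_submatrix_equiv hA e hM hblk.symm, hinM]

theorem inertia_eq_of_forall_re_det_leadingSubmatrix_mul_pos {n : ℕ}
    {A B : Matrix (Fin n) (Fin n) ℂ} (hA : A.IsHermitian) (hB : B.IsHermitian)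
    (h : ∀ s (hs : s ≤ n), 0 < (A.leadingSubmatrix hs).det.re * (B.leadingSubmatrix hs).det.re) :
    hA.inertia = hB.inertia := by
  induction n with
  | zero => simp [inertia, iNeg, iZero, iPos]
  | succ n ih =>
    have h' : ∀ s (hs : s ≤ n), 0 < ((A.leadingSubmatrix n.le_succ).leadingSubmatrix hs).det.re *
        ((B.leadingSubmatrix n.le_succ).leadingSubmatrix hs).det.re :=
      fun s hs => h s (hs.trans n.le_succ)
    have hpos : 0 < (A.leadingSubmatrix n.le_succ).det.re * (B.leadingSubmatrix n.le_succ).det.re :=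
      h n n.le_succ
    obtain ⟨a, hdetA, hinA⟩ := exists_det_eq_mul_inertia_eq_add hA (hA.submatrix _)
      fun h0 => by simp [h0] at hpos
    obtain ⟨b, hdetB, hinB⟩ := exists_det_eq_mul_inertia_eq_add hB (hB.submatrix _)
      fun h0 => by simp [h0] at hpos
    have hab : 0 < a * b := by
      have hpos' : 0 < A.det.re * B.det.re := h (n + 1) le_rfl
      rw [hdetA, hdetB, Complex.re_mul_ofReal, Complex.re_mul_ofReal] at hpos'
      exact pos_of_mul_pos_right (by linarith [hpos']) hpos.le
    rw [hinA, hinB, ih _ _ h', Multiset.signCounts_singleton_eq_of_mul_pos hab]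

end Matrix.IsHermitian

/-- If all leading principal minors of Hermitian `A` and `B` are nonzero and
have the same sign, then `A` and `B` have the same inertia. -/
theorem inertia_eq_of_minors_same_sign {n : ℕ} (A B : Matrix (Fin n) (Fin n) ℂ)
    (hA : A.IsHermitian) (hB : B.IsHermitian)
    (h : ∀ s : ℕ, 1 ≤ s → ∀ hs : s ≤ n,
      (A.submatrix (Fin.castLE hs) (Fin.castLE hs)).det ≠ 0 ∧
      (B.submatrix (Fin.castLE hs) (Fin.castLE hs)).det ≠ 0 ∧
      0 < (A.submatrix (Fin.castLE hs) (Fin.castLE hs)).det.re *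
          (B.submatrix (Fin.castLE hs) (Fin.castLE hs)).det.re) :
    iNeg hA = iNeg hB ∧ iZero hA = iZero hB ∧ iPos hA = iPos hB := by
  have key := hA.inertia_eq_of_forall_re_det_leadingSubmatrix_mul_pos hB fun s hs => by
    rcases Nat.eq_zero_or_pos s with rfl | hs₁
    · simp
    · exact (h s hs₁ hs).2.2
  simpa [IsHermitian.inertia] using key
end

section
/- Let M be an n×n Hermitian complex matrix, let 1 ≤ s ≤ n, and let A = (α₁,…,α_s) be an n×s complex matrix with columns α₁,…,α_s. If some column α_l does not lie in the range (column space) of M, then for every real k > 0 the matrix N = M − k A A† satisfies i_-(N) > i_-(M). -/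
/-!
The eigenvectors of `M` with negative eigenvalue span a space `V` of dimension `i₋(M)` on which
the form `x ↦ ⟪x, M x⟫` is negative definite. Since `range M = (ker M)ᗮ`, a column `α` of `A`
outside `range M` gives `u ∈ ker M` with `⟪α, u⟫ ≠ 0`, hence `A† u ≠ 0`. For `x = y + c u` with
`y ∈ V` the form of `N = M - k A A†` is `⟪y, M y⟫ - k ‖A† x‖²`, which is negative unless `x = 0`,
so `N` is negative definite on `V ⊕ ℂ u`. A subspace on which the form of `N` is negative definite
meets the span of the eigenvectors of `N` with nonnegative eigenvalue trivially, so its dimension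
is at most `i₋(N)`.
-/

open Matrix Kronecker
open scoped ComplexOrder

open Module Submodule RCLike
open scoped InnerProductSpace

namespace LinearMap

variable {𝕜 E F : Type*} [RCLike 𝕜] [NormedAddCommGroup E] [InnerProductSpace 𝕜 E]
  [NormedAddCommGroup F] [InnerProductSpace 𝕜 F]

def IsNegDefOn (T : E →ₗ[𝕜] E) (V : Submodule 𝕜 E) : Prop :=
  ∀ x ∈ V, x ≠ 0 → re ⟪x, T x⟫_𝕜 < 0

lemma IsNegDefOn.notMem_of_apply_eq_zero {T : E →ₗ[𝕜] E} {V : Submodule 𝕜 E}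
    (hV : T.IsNegDefOn V) {u : E} (hu : T u = 0) (hu0 : u ≠ 0) : u ∉ V := fun huV => by
  simpa [hu] using hV u huV hu0

lemma IsSymmetric.exists_apply_eq_zero_inner_ne_zero [FiniteDimensional 𝕜 E] {T : E →ₗ[𝕜] E}
    (hT : T.IsSymmetric) {a : E} (ha : a ∉ range T) : ∃ u, T u = 0 ∧ ⟪a, u⟫_𝕜 ≠ 0 := by
  contrapose! ha
  rw [← (range T).orthogonal_orthogonal, hT.orthogonal_range, mem_orthogonal']
  exact ha

lemma IsNegDefOn.sub_smul_adjoint_comp_self_sup_span_singleton [FiniteDimensional 𝕜 E]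
    [FiniteDimensional 𝕜 F] {T : E →ₗ[𝕜] E} (hT : T.IsSymmetric) {V : Submodule 𝕜 E}
    (hV : T.IsNegDefOn V) {u : E} (hu : T u = 0) {B : E →ₗ[𝕜] F} (hBu : B u ≠ 0) {k : ℝ}
    (hk : 0 < k) : (T - (k : 𝕜) • (B.adjoint ∘ₗ B)).IsNegDefOn (V ⊔ 𝕜 ∙ u) := by
  intro x hx hx0
  obtain ⟨y, hy, z, hz, rfl⟩ := mem_sup.mp hx
  obtain ⟨c, rfl⟩ := mem_span_singleton.mp hz
  have hTu : ⟪c • u, T y⟫_𝕜 = 0 := by rw [inner_smul_left, ← hT, hu, inner_zero_left, mul_zero]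
  have hform : re ⟪y + c • u, (T - (k : 𝕜) • (B.adjoint ∘ₗ B)) (y + c • u)⟫_𝕜
      = re ⟪y, T y⟫_𝕜 - k * ‖B (y + c • u)‖ ^ 2 := by
    rw [sub_apply, inner_sub_right, smul_apply, comp_apply, inner_smul_right,
      adjoint_inner_right, inner_self_eq_norm_sq_to_K, map_add, map_smul, hu, smul_zero, add_zero,
      inner_add_left, hTu, add_zero, map_sub, re_ofReal_mul]
    norm_cast
  rw [hform]
  by_cases hy0 : y = 0
  · subst hy0
    have hc : c ≠ 0 := by rintro rfl; simp at hx0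
    have : 0 < ‖B (0 + c • u)‖ := by simpa [hc] using hBu
    simp only [inner_zero_left, map_zero]
    nlinarith [mul_pos hk (pow_pos this 2)]
  · nlinarith [hV y hy hy0, sq_nonneg ‖B (y + c • u)‖]

end LinearMap

namespace Matrix.IsHermitian

section RCLike

variable {𝕜 ι : Type*} [RCLike 𝕜] [Fintype ι] [DecidableEq ι] {H : Matrix ι ι 𝕜}
  (hH : H.IsHermitian)

lemma toEuclideanLin_eigenvectorBasis (i : ι) :
    toEuclideanLin H (hH.eigenvectorBasis i) = (hH.eigenvalues i : 𝕜) • hH.eigenvectorBasis i := by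
  rw [toLpLin_apply, hH.mulVec_eigenvectorBasis, RCLike.real_smul_eq_coe_smul (K := 𝕜)]
  rfl

lemma eigenvectorBasis_repr_toEuclideanLin (x : EuclideanSpace 𝕜 ι) (i : ι) :
    hH.eigenvectorBasis.repr (toEuclideanLin H x) i
      = hH.eigenvalues i * hH.eigenvectorBasis.repr x i := by
  rw [OrthonormalBasis.repr_apply_apply, OrthonormalBasis.repr_apply_apply,
    ← isSymmetric_toEuclideanLin_iff.mpr hH, toEuclideanLin_eigenvectorBasis, inner_smul_left,
    conj_ofReal]

lemma re_inner_toEuclideanLin_self (x : EuclideanSpace 𝕜 ι) :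
    re ⟪x, toEuclideanLin H x⟫_𝕜 = ∑ i, hH.eigenvalues i * ‖hH.eigenvectorBasis.repr x i‖ ^ 2 := by
  rw [← hH.eigenvectorBasis.repr.inner_map_map, PiLp.inner_apply, map_sum]
  refine Finset.sum_congr rfl fun i _ => ?_
  rw [eigenvectorBasis_repr_toEuclideanLin, inner_apply, mul_assoc, mul_conj]
  norm_cast

def negEigenspan : Submodule 𝕜 (EuclideanSpace 𝕜 ι) :=
  span 𝕜 (hH.eigenvectorBasis '' {i | hH.eigenvalues i < 0})

lemma isNegDefOn_negEigenspan : (toEuclideanLin H).IsNegDefOn hH.negEigenspan := by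
  intro x hx hx0
  have hsupp : ∀ i, hH.eigenvectorBasis.repr x i ≠ 0 → hH.eigenvalues i < 0 := by
    rw [negEigenspan, ← hH.eigenvectorBasis.coe_toBasis, Basis.mem_span_image] at hx
    exact fun i hi => hx (by simpa using hi)
  obtain ⟨i, hi⟩ : ∃ i, hH.eigenvectorBasis.repr x i ≠ 0 := by
    by_contra! h
    exact hx0 (hH.eigenvectorBasis.repr.injective (by ext i; simp [h]))
  rw [hH.re_inner_toEuclideanLin_self]
  refine Finset.sum_neg' (fun j _ => ?_)
    ⟨i, Finset.mem_univ i, mul_neg_of_neg_of_pos (hsupp i hi) (by positivity)⟩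
  by_cases hj : hH.eigenvectorBasis.repr x j = 0
  · simp [hj]
  · exact mul_nonpos_of_nonpos_of_nonneg (hsupp j hj).le (sq_nonneg _)

end RCLike

variable {ι : Type} [Fintype ι] [DecidableEq ι] {H : Matrix ι ι ℂ} (hH : H.IsHermitian)

lemma finrank_negEigenspan : finrank ℂ hH.negEigenspan = iNeg hH := by
  rw [negEigenspan, Set.image_eq_range]
  exact (finrank_span_eq_card (hH.eigenvectorBasis.orthonormal.linearIndependent.comp _
    Subtype.val_injective)).trans (Fintype.card_subtype _)

lemma finrank_le_iNeg_of_isNegDefOn {V : Submodule ℂ (EuclideanSpace ℂ ι)}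
    (hV : (toEuclideanLin H).IsNegDefOn V) : finrank ℂ V ≤ iNeg hH := by
  have hnonneg : ∀ x ∈ hH.negEigenspanᗮ, 0 ≤ re ⟪x, toEuclideanLin H x⟫_ℂ := by
    intro x hx
    rw [hH.re_inner_toEuclideanLin_self]
    refine Finset.sum_nonneg fun i _ => ?_
    by_cases hi : hH.eigenvalues i < 0
    · have : hH.eigenvectorBasis.repr x i = 0 := by
        rw [OrthonormalBasis.repr_apply_apply]
        exact inner_right_of_mem_orthogonal (subset_span (Set.mem_image_of_mem _ hi)) hx
      simp [this]
    · exact mul_nonneg (not_lt.mp hi) (sq_nonneg _)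
  have hdisj : Disjoint V hH.negEigenspanᗮ := by
    rw [disjoint_def]
    intro x hxV hx
    by_contra hx0
    exact (hV x hxV hx0).not_ge (hnonneg x hx)
  have := finrank_add_finrank_le_of_disjoint hdisj
  have := hH.negEigenspan.finrank_add_finrank_orthogonal
  rw [finrank_negEigenspan] at *
  omega

end Matrix.IsHermitian

theorem inertia_sub_rank_one_neg_increase_general {n s : ℕ}
    (M : Matrix (Fin n) (Fin n) ℂ) (hM : M.IsHermitian)
    (A : Matrix (Fin n) (Fin s) ℂ)
    (hcol : ∃ l : Fin s, ¬ ∃ v : Fin n → ℂ, M *ᵥ v = fun i => A i l) :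
    ∀ k : ℝ, 0 < k →
      ∀ hN : (M - (k : ℂ) • (A * Aᴴ)).IsHermitian,
        iNeg hM < iNeg hN := by
  obtain ⟨l, hl⟩ := hcol
  intro k hk hN
  have hM_symm := isSymmetric_toEuclideanLin_iff.mpr hM
  have hcol_range : WithLp.toLp 2 (fun i => A i l) ∉ LinearMap.range (toEuclideanLin M) := by
    rintro ⟨v, hv⟩
    exact hl ⟨v.ofLp, congrArg WithLp.ofLp hv⟩
  obtain ⟨u, hMu, hcol_u⟩ := hM_symm.exists_apply_eq_zero_inner_ne_zero hcol_range
  -- the `l`-th entry of `A† u` is the inner product of column `l` of `A` with `u`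
  have hAu : toEuclideanLin Aᴴ u ≠ 0 := fun h => hcol_u <| by
    simpa [PiLp.inner_apply, mulVec, dotProduct, mul_comm] using congr($h l)
  have hu0 : u ≠ 0 := by rintro rfl; simp at hAu
  have hN_eq : toEuclideanLin (M - (k : ℂ) • (A * Aᴴ))
      = toEuclideanLin M - (k : ℂ) • ((toEuclideanLin Aᴴ).adjoint ∘ₗ toEuclideanLin Aᴴ) := by
    rw [← toEuclideanLin_conjTranspose_eq_adjoint, conjTranspose_conjTranspose,
      ← toLpLin_mul_same, map_sub, map_smul]
  have hW : (toEuclideanLin (M - (k : ℂ) • (A * Aᴴ))).IsNegDefOn (hM.negEigenspan ⊔ ℂ ∙ u) := by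
    rw [hN_eq]
    exact hM.isNegDefOn_negEigenspan.sub_smul_adjoint_comp_self_sup_span_singleton
      hM_symm hMu hAu hk
  calc iNeg hM < finrank ℂ ↥(hM.negEigenspan ⊔ ℂ ∙ u) := by
        rw [finrank_sup_span_singleton
          (hM.isNegDefOn_negEigenspan.notMem_of_apply_eq_zero hMu hu0), hM.finrank_negEigenspan]
        omega
    _ ≤ iNeg hN := hN.finrank_le_iNeg_of_isNegDefOn hW

/-- If some column of `A` does not lie in the range of the Hermitian matrix
`M`, then for every `k > 0` the matrix `M - k A A†` has strictly more negative
eigenvalues than `M`. -/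
theorem inertia_sub_rank_one_neg_increase {n s : ℕ} (hs1 : 1 ≤ s) (hsn : s ≤ n)
    (M : Matrix (Fin n) (Fin n) ℂ) (hM : M.IsHermitian)
    (A : Matrix (Fin n) (Fin s) ℂ)
    (hcol : ∃ l : Fin s, ¬ ∃ v : Fin n → ℂ, M *ᵥ v = fun i => A i l) :
    ∀ k : ℝ, 0 < k →
      ∀ hN : (M - (k : ℂ) • (A * Aᴴ)).IsHermitian,
        iNeg hM < iNeg hN :=
  inertia_sub_rank_one_neg_increase_general M hM A hcol
end

section
/- Let M = [M_{ij}] be a 9×9 positive semidefinite complex matrix viewed as a 3×3 block matrix with 3×3 blocks (a two-qutrit state on ℂ^3⊗ℂ^3). If the block M_{12} is Hermitian and the partial transpose M^Γ has inertia (3,2,4), then the kernel of M^Γ is contained in the kernel of M. -/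
open Matrix Kronecker
open scoped ComplexOrder

section Aux

/-- dot product distributes over finite sums on the right -/
lemma dotProduct_finsum {ι κ : Type*} [Fintype ι] [Fintype κ] (a : κ → ℂ) (f : ι → κ → ℂ) :
    a ⬝ᵥ (∑ i, f i) = ∑ i, a ⬝ᵥ f i := by
  simp only [dotProduct, Finset.sum_apply, Finset.mul_sum]
  exact Finset.sum_comm

/-- dot product distributes over finite sums on the left -/
lemma finsum_dotProduct {ι κ : Type*} [Fintype ι] [Fintype κ] (a : κ → ℂ) (f : ι → κ → ℂ) :
    (∑ i, f i) ⬝ᵥ a = ∑ i, f i ⬝ᵥ a := by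
  simp only [dotProduct, Finset.sum_apply, Finset.sum_mul]
  exact Finset.sum_comm

/-- The embedding of the first two block rows. -/
noncomputable def emb : (Fin 2 × Fin 3 → ℂ) →ₗ[ℂ] (Fin 3 × Fin 3 → ℂ) where
  toFun s p := if h : (p.1 : ℕ) < 2 then s (⟨p.1, h⟩, p.2) else 0
  map_add' s t := by funext p; by_cases h : (p.1 : ℕ) < 2 <;> simp only [Pi.add_apply, h, dite_true, dite_false, add_zero]
  map_smul' c s := by funext p; by_cases h : (p.1 : ℕ) < 2 <;> simp only [Pi.smul_apply, smul_eq_mul, RingHom.id_apply, h, dite_true, dite_false, mul_zero]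

lemma emb_two (s : Fin 2 × Fin 3 → ℂ) (k : Fin 3) : emb s (2, k) = 0 := by
  simp [emb]

lemma emb_fst (s : Fin 2 × Fin 3 → ℂ) (p : Fin 3 × Fin 3) (h : (p.1 : ℕ) < 2) :
    emb s p = s (⟨p.1, h⟩, p.2) := by
  exact dif_pos h

lemma corner_eq (M : Matrix (Fin 3 × Fin 3) (Fin 3 × Fin 3) ℂ) (hM : M.IsHermitian)
    (h12 : (Matrix.of fun k l : Fin 3 => M (0, k) (1, l)).IsHermitian)
    (p q : Fin 3 × Fin 3) (hp : p.1 ≠ 2) (hq : q.1 ≠ 2) :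
    ptrans M p q = M p q := by
  obtain ⟨i, k⟩ := p; obtain ⟨j, l⟩ := q
  have key : ∀ k l : Fin 3, M (1, k) (0, l) = M (0, k) (1, l) := by
    intro k l
    have e1 : M (1, k) (0, l) = star (M (0, l) (1, k)) := by
      conv_lhs => rw [← hM.eq]
      simp [Matrix.conjTranspose_apply]
    have e2 : star (M (0, l) (1, k)) = M (0, k) (1, l) := by
      have h := congrFun (congrFun h12.eq k) l
      simpa [Matrix.conjTranspose_apply] using h
    rw [e1, e2]
  simp only at hp hq
  fin_cases i <;> fin_cases j <;> simp_all [ptrans, key]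

lemma dot_corner (M : Matrix (Fin 3 × Fin 3) (Fin 3 × Fin 3) ℂ) (hM : M.IsHermitian)
    (h12 : (Matrix.of fun k l : Fin 3 => M (0, k) (1, l)).IsHermitian)
    (a b : Fin 3 × Fin 3 → ℂ)
    (ha : ∀ k, a (2, k) = 0) (hb : ∀ k, b (2, k) = 0) :
    a ⬝ᵥ (ptrans M *ᵥ b) = a ⬝ᵥ (M *ᵥ b) := by
  simp only [dotProduct, Matrix.mulVec]
  refine Finset.sum_congr rfl fun p _ => ?_
  by_cases hp : p.1 = 2
  · have hap : a p = 0 := by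
      have hpe : p = (2, p.2) := Prod.ext_iff.mpr ⟨hp, rfl⟩
      rw [hpe]; exact ha p.2
    simp [hap]
  · congr 1
    refine Finset.sum_congr rfl fun q _ => ?_
    by_cases hq : q.1 = 2
    · have hbq : b q = 0 := by
        have hqe : q = (2, q.2) := Prod.ext_iff.mpr ⟨hq, rfl⟩
        rw [hqe]; exact hb q.2
      simp [hbq]
    · rw [corner_eq M hM h12 p q hp hq]

end Aux

/-- If `M` is a two-qutrit state with Hermitian block `M₁₂` and
`In M^Γ = (3,2,4)`, then `Ker M^Γ ⊆ Ker M`. -/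
theorem ker_ptrans_subset_ker
    (M : Matrix (Fin 3 × Fin 3) (Fin 3 × Fin 3) ℂ) (hM : M.PosSemidef)
    (h12 : (Matrix.of fun k l : Fin 3 => M (0, k) (1, l)).IsHermitian)
    (hΓ : (ptrans M).IsHermitian)
    (hneg : iNeg hΓ = 3) (hzero : iZero hΓ = 2) (hpos : iPos hΓ = 4) :
    ∀ v : Fin 3 × Fin 3 → ℂ, ptrans M *ᵥ v = 0 → M *ᵥ v = 0 := by
  intro v hv
  by_cases hvS : ∀ k, v (2, k) = 0
  · have h0 : star v ⬝ᵥ (M *ᵥ v) = 0 := by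
      rw [← dot_corner M hM.1 h12 (star v) v (fun k => by simp [hvS k]) hvS, hv,
        dotProduct_zero]
    exact (hM.dotProduct_mulVec_zero_iff v).mp h0
  · exfalso
    push_neg at hvS
    obtain ⟨k₀, hk₀⟩ := hvS
    set u := hΓ.eigenvectorBasis with hu
    have hcard : Fintype.card {i : Fin 3 × Fin 3 // hΓ.eigenvalues i < 0} = 3 := by
      rw [Fintype.card_subtype]
      exact hneg
    set F := {i : Fin 3 × Fin 3 // hΓ.eigenvalues i < 0}
    -- the combined linear map
    let w : F → (Fin 3 × Fin 3 → ℂ) := fun i => ⇑(u i.1)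
    let L : ((Fin 2 × Fin 3 → ℂ) × ℂ × (F → ℂ)) →ₗ[ℂ] (Fin 3 × Fin 3 → ℂ) :=
      { toFun := fun t => emb t.1 + t.2.1 • v + ∑ i : F, t.2.2 i • w i
        map_add' := by
          intro t r
          simp only [Prod.fst_add, Prod.snd_add, map_add, Pi.add_apply, add_smul,
            Finset.sum_add_distrib]
          abel
        map_smul' := by
          intro a t
          simp only [Prod.smul_fst, Prod.smul_snd, _root_.map_smul, Pi.smul_apply, smul_eq_mul,
            mul_smul, RingHom.id_apply, smul_add, Finset.smul_sum] }
    have hfr1 : Module.finrank ℂ ((Fin 2 × Fin 3 → ℂ) × ℂ × (F → ℂ)) = 10 := by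
      simp [Module.finrank_prod, Module.finrank_fintype_fun_eq_card, hcard]
      have hF : Fintype.card F = 3 := by convert hcard
      omega
    have hfr2 : Module.finrank ℂ (Fin 3 × Fin 3 → ℂ) = 9 := by
      simp [Module.finrank_fintype_fun_eq_card]
    have hni : ¬ Function.Injective L := by
      intro hinj
      have hle := LinearMap.finrank_le_finrank_of_injective hinj
      rw [hfr1, hfr2] at hle
      omega
    obtain ⟨t₁, t₂, het, hne⟩ := Function.not_injective_iff.mp hni
    have htne : t₁ - t₂ ≠ 0 := sub_ne_zero.mpr hne
    set s := t₁.1 - t₂.1 with hs'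
    set c := t₁.2.1 - t₂.2.1 with hc'
    set d := t₁.2.2 - t₂.2.2 with hd'
    have hL : emb s + c • v + ∑ i : F, d i • w i = 0 := by
      have h1 : L (t₁ - t₂) = 0 := by rw [map_sub, het, sub_self]
      simpa [L, hs', hc', hd', Prod.fst_sub, Prod.snd_sub] using h1
    by_cases hd : d = 0
    · rw [hd] at hL
      simp only [Pi.zero_apply, zero_smul, Finset.sum_const_zero, add_zero] at hL
      have h2 := congrFun hL (2, k₀)
      simp only [Pi.add_apply, Pi.smul_apply, smul_eq_mul, emb_two, zero_add,
        Pi.zero_apply] at h2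
      have hc : c = 0 := by
        rcases mul_eq_zero.mp h2 with h | h
        · exact h
        · exact absurd h hk₀
      rw [hc, zero_smul, add_zero] at hL
      have hs : s = 0 := by
        funext ik
        obtain ⟨i, k⟩ := ik
        have h3 := congrFun hL (⟨(i : ℕ), by omega⟩, k)
        rw [emb_fst s _ (by simpa using i.2)] at h3
        simpa using h3
      apply htne
      have : t₁ - t₂ = (s, c, d) := rfl
      rw [this, hs, hc, hd]
      rfl
    · -- some negative-direction coefficient is nonzero
      have hdi : ∃ i, d i ≠ 0 := by
        by_contra h
        push_neg at h
        exact hd (funext h)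
      obtain ⟨i₀, hi₀⟩ := hdi
      set x : Fin 3 × Fin 3 → ℂ := ∑ i : F, d i • w i with hx
      have hxeq : x = -(emb s + c • v) := by
        rw [hx]
        exact eq_neg_of_add_eq_zero_right hL
      -- orthonormality
      have horth : ∀ i j : Fin 3 × Fin 3,
          star (⇑(u i) : Fin 3 × Fin 3 → ℂ) ⬝ᵥ ⇑(u j) = if i = j then 1 else 0 := by
        intro i j
        have h := orthonormal_iff_ite.mp u.orthonormal i j
        rw [EuclideanSpace.inner_eq_star_dotProduct, dotProduct_comm] at h
        exact h
      -- eigen action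
      have hNx : ptrans M *ᵥ x = ∑ i : F, (d i * (hΓ.eigenvalues i.1 : ℂ)) • w i := by
        rw [hx, ← (ptrans M).mulVecLin_apply, map_sum]
        refine Finset.sum_congr rfl fun i _ => ?_
        rw [_root_.map_smul, (ptrans M).mulVecLin_apply]
        have := hΓ.mulVec_eigenvectorBasis i.1
        rw [← hu] at this
        rw [show (ptrans M *ᵥ w i) = hΓ.eigenvalues i.1 • ⇑(u i.1) from this]
        funext p
        simp only [Pi.smul_apply, smul_eq_mul, Complex.real_smul, w]
        ring
      have hsx : star x = ∑ i : F, (starRingEnd ℂ) (d i) • star (w i) := by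
        rw [hx, star_sum]
        refine Finset.sum_congr rfl fun i _ => ?_
        rw [star_smul]
        rfl
      have hQa : star x ⬝ᵥ (ptrans M *ᵥ x)
          = ((∑ i : F, hΓ.eigenvalues i.1 * Complex.normSq (d i) : ℝ) : ℂ) := by
        rw [hNx, hsx, finsum_dotProduct]
        have hterm : ∀ i : F,
            (starRingEnd ℂ) (d i) • star (w i) ⬝ᵥ (∑ j : F, (d j * (hΓ.eigenvalues j.1 : ℂ)) • w j)
              = (hΓ.eigenvalues i.1 : ℂ) * Complex.normSq (d i) := by
          intro i
          rw [smul_dotProduct, dotProduct_finsum]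
          have hin : ∀ j : F, star (w i) ⬝ᵥ ((d j * (hΓ.eigenvalues j.1 : ℂ)) • w j)
              = if i = j then d i * (hΓ.eigenvalues i.1 : ℂ) else 0 := by
            intro j
            rw [dotProduct_smul, smul_eq_mul]
            have hwij : star (w i) ⬝ᵥ w j = if i = j then 1 else 0 := by
              by_cases hh : i = j
              · rw [if_pos hh, hh]
                have h := horth j.1 j.1
                rw [if_pos rfl] at h
                exact h
              · rw [if_neg hh]
                have h := horth i.1 j.1
                rw [if_neg (fun hc => hh (Subtype.ext hc))] at h
                exact h
            rw [hwij]
            by_cases h : i = j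
            · subst h; simp
            · simp [h]
          rw [Finset.sum_congr rfl fun j _ => hin j]
          rw [Finset.sum_ite_eq Finset.univ i
            (fun _ => d i * (hΓ.eigenvalues i.1 : ℂ))]
          simp only [Finset.mem_univ, if_true, smul_eq_mul]
          rw [show (starRingEnd ℂ) (d i) * (d i * (hΓ.eigenvalues i.1 : ℂ))
              = (hΓ.eigenvalues i.1 : ℂ) * (d i * (starRingEnd ℂ) (d i)) by ring]
          rw [Complex.mul_conj]
        rw [Finset.sum_congr rfl fun i _ => hterm i]
        push_cast
        rfl
      have hr : (∑ i : F, hΓ.eigenvalues i.1 * Complex.normSq (d i) : ℝ) < 0 := by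
        have hle : ∀ i ∈ Finset.univ (α := F),
            hΓ.eigenvalues i.1 * Complex.normSq (d i) ≤ 0 := by
          intro i _
          exact mul_nonpos_iff.mpr (Or.inr ⟨le_of_lt i.2, Complex.normSq_nonneg _⟩)
        have hlt : hΓ.eigenvalues i₀.1 * Complex.normSq (d i₀) < 0 :=
          mul_neg_of_neg_of_pos i₀.2 (Complex.normSq_pos.mpr hi₀)
        calc (∑ i : F, hΓ.eigenvalues i.1 * Complex.normSq (d i))
            < ∑ _i : F, (0 : ℝ) :=
              Finset.sum_lt_sum hle ⟨i₀, Finset.mem_univ _, by simpa using hlt⟩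
          _ = 0 := by simp
      have hQb : 0 ≤ star x ⬝ᵥ (ptrans M *ᵥ x) := by
        rw [hxeq]
        rw [show ptrans M *ᵥ -(emb s + c • v) = -(ptrans M *ᵥ (emb s + c • v)) from
          Matrix.mulVec_neg _ _]
        rw [star_neg, neg_dotProduct, dotProduct_neg, neg_neg]
        have hNy : ptrans M *ᵥ (emb s + c • v) = ptrans M *ᵥ emb s := by
          rw [Matrix.mulVec_add, Matrix.mulVec_smul, hv, smul_zero, add_zero]
        rw [hNy, star_add, add_dotProduct]
        have h2 : star (c • v) ⬝ᵥ (ptrans M *ᵥ emb s) = 0 := by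
          rw [star_smul, smul_dotProduct]
          have hvm : star v ᵥ* ptrans M = 0 := by
            have h3 := Matrix.star_mulVec (ptrans M) v
            rw [hΓ.eq] at h3
            rw [← h3, hv, star_zero]
          rw [Matrix.dotProduct_mulVec, hvm, zero_dotProduct, smul_zero]
        rw [h2, add_zero]
        rw [dot_corner M hM.1 h12 _ _ (fun k => by simp [emb_two]) (emb_two s)]
        exact hM.dotProduct_mulVec_nonneg (emb s)
      rw [hQa] at hQb
      rw [Complex.zero_le_real] at hQb
      linarith
end
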